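/- arXiv:1612.01625 — 9 statements merged into one kernel-verified Lean document; each statement's English description precedes it below -/
import Mathlib

section
/- For n ≥ 1 and complex numbers a_1, ..., a_n, one has the identity ∑_{j=1}^n a_j ∏_{i≠j} (a_i + a_j)/(a_i - a_j) = (-1)^{n-1} ∑_{j=1}^n a_j, provided the a_i are pairwise distinct. -/
open Finset Polynomial

lemma basis_leadingCoeff {n : ℕ} (a : Fin n → ℂ) (i : Fin n) :
    (Lagrange.basis univ a i).leadingCoeff = Lagrange.nodalWeight univ a i := by
  unfold Lagrange.basis Lagrange.nodalWeight
  rw [leadingCoeff_prod]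
  refine Finset.prod_congr rfl fun j hj => ?_
  unfold Lagrange.basisDivisor
  rw [leadingCoeff_mul, leadingCoeff_C, (monic_X_sub_C _).leadingCoeff, mul_one]

/-- Identity (eq. residues): for pairwise distinct complex numbers `a_1, ..., a_n` (`n ≥ 1`),
`∑_j a_j ∏_{i≠j} (a_i + a_j)/(a_i - a_j) = (-1)^(n-1) ∑_j a_j`. -/
theorem stmt0 (n : ℕ) (hn : 1 ≤ n) (a : Fin n → ℂ) (hdist : Function.Injective a) :
    ∑ j : Fin n, a j * ∏ i ∈ Finset.univ.erase j, (a i + a j) / (a i - a j) =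
      (-1) ^ (n - 1) * ∑ j : Fin n, a j := by
  classical
  set A : Polynomial ℂ := ∏ i : Fin n, (X - C (-a i)) with hA
  set B : Polynomial ℂ := ∏ i : Fin n, (X - C (a i)) with hB
  have hAm : A.Monic := monic_prod_of_monic _ _ fun i _ => monic_X_sub_C _
  have hBm : B.Monic := monic_prod_of_monic _ _ fun i _ => monic_X_sub_C _
  have hAdeg : A.natDegree = n := by
    rw [hA, natDegree_prod _ _ fun i _ => X_sub_C_ne_zero _]
    simp
  have hBdeg : B.natDegree = n := by
    rw [hB, natDegree_prod _ _ fun i _ => X_sub_C_ne_zero _]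
    simp
  have hdlt : (A - B).degree < (Finset.univ : Finset (Fin n)).card := by
    rcases eq_or_ne A B with h | h
    · rw [h, sub_self, degree_zero]
      exact WithBot.bot_lt_coe _
    · calc (A - B).degree < A.degree := by
            apply degree_sub_lt ?_ hAm.ne_zero ?_
            · rw [degree_eq_natDegree hAm.ne_zero, degree_eq_natDegree hBm.ne_zero,
                hAdeg, hBdeg]
            · rw [hAm.leadingCoeff, hBm.leadingCoeff]
          _ ≤ (Finset.univ : Finset (Fin n)).card := by
            rw [degree_eq_natDegree hAm.ne_zero, hAdeg]
            simp
  have key := Lagrange.eq_interpolate (v := a) hdist.injOn hdlt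
  have hco := congrArg (fun p => Polynomial.coeff p (n - 1)) key
  simp only [Lagrange.interpolate_apply, finset_sum_coeff, coeff_C_mul] at hco
  have hAc : A.coeff (n - 1) = ∑ i, a i := by
    have := prod_X_sub_C_coeff_card_pred (univ : Finset (Fin n)) (fun i => -a i)
      (by simpa using Nat.pos_of_ne_zero (by omega))
    simp only [card_univ, Fintype.card_fin] at this
    rw [← hA] at this
    simpa using this
  have hBc : B.coeff (n - 1) = -∑ i, a i := by
    have := prod_X_sub_C_coeff_card_pred (univ : Finset (Fin n)) a
      (by simpa using Nat.pos_of_ne_zero (by omega))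
    simp only [card_univ, Fintype.card_fin] at this
    rw [← hB] at this
    simpa using this
  have hlhs : (A - B).coeff (n - 1) = 2 * ∑ i, a i := by
    rw [coeff_sub, hAc, hBc]; ring
  have hbc : ∀ i : Fin n, (Lagrange.basis univ a i).coeff (n - 1)
      = ∏ j ∈ univ.erase i, (a i - a j)⁻¹ := by
    intro i
    have hnd := Lagrange.natDegree_basis hdist.injOn (mem_univ i)
    simp only [card_univ, Fintype.card_fin] at hnd
    rw [← hnd, ← leadingCoeff, basis_leadingCoeff]
    rfl
  have heval : ∀ i : Fin n, (A - B).eval (a i) = ∏ k, (a k + a i) := by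
    intro i
    have hBe : B.eval (a i) = 0 := by
      rw [hB]
      simp only [eval_prod, eval_sub, eval_X, eval_C]
      exact Finset.prod_eq_zero (mem_univ i) (sub_self _)
    rw [eval_sub, hBe, sub_zero, hA]
    simp only [eval_prod, eval_sub, eval_X, eval_C]
    exact Finset.prod_congr rfl fun k _ => by ring
  rw [hlhs] at hco
  simp only [hbc, heval] at hco
  have hterm : ∀ i : Fin n, (∏ k, (a k + a i)) * ∏ j ∈ univ.erase i, (a i - a j)⁻¹
      = 2 * (-1 : ℂ) ^ (n - 1) * (a i * ∏ j ∈ univ.erase i, (a j + a i) / (a j - a i)) := by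
    intro i
    have hsplit : (∏ k, (a k + a i)) = (2 * a i) * ∏ k ∈ univ.erase i, (a k + a i) := by
      rw [← Finset.mul_prod_erase univ _ (mem_univ i)]; ring
    have hcard : (univ.erase i).card = n - 1 := by
      rw [card_erase_of_mem (mem_univ i)]; simp
    have hflip : (∏ j ∈ univ.erase i, (a i - a j)⁻¹)
        = (-1 : ℂ) ^ (n - 1) * ∏ j ∈ univ.erase i, (a j - a i)⁻¹ := by
      rw [← hcard, ← Finset.prod_const (-1 : ℂ), ← Finset.prod_mul_distrib]
      refine Finset.prod_congr rfl fun j hj => ?_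
      rw [← neg_sub (a j) (a i), inv_neg]; ring
    rw [hsplit, hflip, Finset.prod_div_distrib, div_eq_mul_inv, ← Finset.prod_inv_distrib]
    ring
  rw [Finset.sum_congr rfl fun i _ => hterm i, ← Finset.mul_sum] at hco
  have h1 : (∑ i, a i)
      = (-1 : ℂ) ^ (n - 1) * ∑ j : Fin n, a j * ∏ i ∈ univ.erase j, (a i + a j) / (a i - a j) := by
    apply mul_left_cancel₀ (by norm_num : (2 : ℂ) ≠ 0)
    rw [hco]; ring
  have hpow : (-1 : ℂ) ^ (n - 1) * (-1 : ℂ) ^ (n - 1) = 1 := by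
    rw [← pow_add, ← two_mul, pow_mul, neg_one_sq, one_pow]
  rw [h1, ← mul_assoc, hpow, one_mul]
end

section
/- Let n = 2m and let a_1, ..., a_n be complex numbers with a_{m+1}, ..., a_n pairwise distinct. Then ∑_{j=m+1}^{n} [∏_{i=1}^{m} (a_j + a_i)] / [∏_{m<k≤n, k≠j} (a_j - a_k)] = ∑_{i=1}^{n} a_i. -/
open Finset


section Aux
open Polynomial Lagrange

theorem coeff_basis' {F : Type*} [Field F] {ι : Type*} [DecidableEq ι]
    {s : Finset ι} {v : ι → F} {i : ι} (hi : i ∈ s) :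
    (Lagrange.basis s v i).coeff (#s - 1) = nodalWeight s v i := by
  rw [Lagrange.basis_eq_prod_sub_inv_mul_nodal_div hi, ← nodal_erase_eq_nodal_div hi,
    coeff_C_mul, ← card_erase_of_mem hi]
  have : (nodal (s.erase i) v).coeff (#(s.erase i)) = 1 := by
    rw [← natDegree_nodal (v := v) (s := s.erase i)]
    exact (nodal_monic).coeff_natDegree
  rw [this, mul_one]

theorem coeff_interpolate' {F : Type*} [Field F] {ι : Type*} [DecidableEq ι]
    (s : Finset ι) (v : ι → F) (r : ι → F) :
    (interpolate s v r).coeff (#s - 1) = ∑ i ∈ s, r i * nodalWeight s v i := by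
  rw [interpolate_apply, finset_sum_coeff]
  exact sum_congr rfl fun i hi => by rw [coeff_C_mul, coeff_basis' hi]

end Aux

section Main
open Polynomial Lagrange

/-- For `n = 2m` and complex numbers `a_1, ..., a_n` with `a_{m+1}, ..., a_n` pairwise distinct,
`∑_{j=m+1}^{n} [∏_{i=1}^{m} (a_j + a_i)] / [∏_{m<k≤n, k≠j} (a_j - a_k)] = ∑_{i=1}^{n} a_i`. -/
theorem stmt1 (m : ℕ) (a : ℕ → ℂ)
    (hdist : ∀ i ∈ Finset.Icc (m + 1) (2 * m), ∀ j ∈ Finset.Icc (m + 1) (2 * m),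
      i ≠ j → a i ≠ a j) :
    ∑ j ∈ Finset.Icc (m + 1) (2 * m),
        (∏ i ∈ Finset.Icc 1 m, (a j + a i)) /
          (∏ k ∈ (Finset.Icc (m + 1) (2 * m)).erase j, (a j - a k)) =
      ∑ i ∈ Finset.Icc 1 (2 * m), a i := by
  rcases Nat.eq_zero_or_pos m with hm | hm
  · subst hm; simp
  set s := Finset.Icc (m + 1) (2 * m) with hs
  have hcard : #s = m := by rw [hs, Nat.card_Icc]; omega
  have hvs : Set.InjOn a s := fun i hi j hj hij => by
    by_contra h
    exact hdist i (by simpa using hi) j (by simpa using hj) h hij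
  set f : Polynomial ℂ := ∏ i ∈ Finset.Icc 1 m, (X + C (a i)) with hf
  have hcard1 : #(Finset.Icc 1 m) = m := by rw [Nat.card_Icc]; omega
  have hfm : f.Monic := monic_prod_of_monic _ _ fun i _ => monic_X_add_C _
  have hfd : f.natDegree = m := by
    rw [hf, natDegree_prod _ _ fun i _ => (monic_X_add_C _).ne_zero]
    simp [hcard1]
  set g : Polynomial ℂ := f - nodal s a with hg
  have hdeg : g.degree < (#s : ℕ) := by
    have hdf : f.degree = (m : ℕ) := by
      rw [degree_eq_natDegree hfm.ne_zero, hfd]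
    have h1 : f.degree = (nodal s a).degree := by rw [degree_nodal, hcard, hdf]
    have := degree_sub_lt h1 hfm.ne_zero (by rw [hfm.leadingCoeff, nodal_monic.leadingCoeff])
    rw [hdf, ← hcard] at this
    exact this
  have hinterp : interpolate s a (fun i => g.eval (a i)) = g :=
    (eq_interpolate hvs hdeg).symm
  -- rewrite LHS
  have step1 : ∀ j ∈ s, (∏ i ∈ Finset.Icc 1 m, (a j + a i)) /
      (∏ k ∈ s.erase j, (a j - a k)) = g.eval (a j) * nodalWeight s a j := by
    intro j hj
    have hfe : f.eval (a j) = ∏ i ∈ Finset.Icc 1 m, (a j + a i) := by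
      simp [hf, eval_prod]
    have hge : g.eval (a j) = f.eval (a j) := by
      simp [hg, eval_nodal_at_node hj]
    rw [hge, hfe, nodalWeight, div_eq_mul_inv, prod_inv_distrib]
  rw [sum_congr rfl step1]
  have step2 : ∑ j ∈ s, g.eval (a j) * nodalWeight s a j = g.coeff (#s - 1) := by
    rw [← coeff_interpolate' s a, hinterp]
  rw [step2]
  -- compute the coefficient
  have hfc : f.coeff (m - 1) = ∑ i ∈ Finset.Icc 1 m, a i := by
    have heq : f = ∏ i ∈ Finset.Icc 1 m, (X - C (-a i)) := by
      simp [hf, sub_neg_eq_add]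
    have h := prod_X_sub_C_coeff_card_pred (Finset.Icc 1 m) (fun i => -a i)
      (by rw [hcard1]; exact hm)
    rw [hcard1] at h
    rw [heq, h]; simp
  have hnc : (nodal s a).coeff (m - 1) = -∑ j ∈ s, a j := by
    have h := prod_X_sub_C_coeff_card_pred s a (by rw [hcard]; exact hm)
    rw [hcard] at h
    rw [nodal_eq, h]
  rw [hcard, hg, coeff_sub, hfc, hnc]
  -- RHS split
  have hsplit : ∑ i ∈ Finset.Icc 1 (2 * m), a i
      = ∑ i ∈ Finset.Icc 1 m, a i + ∑ j ∈ s, a j := by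
    rw [hs, show (1:ℕ) = 0 + 1 from rfl, Finset.Icc_add_one_left_eq_Ioc, Finset.Icc_add_one_left_eq_Ioc,
      zero_add, Finset.Icc_add_one_left_eq_Ioc, Finset.sum_Ioc_consecutive _ (Nat.zero_le m) (by omega)]
  rw [hsplit]; ring

end Main
end

section
/- Let n = 2m - 1 and let a_1, ..., a_n be complex numbers with a_1, ..., a_m pairwise distinct. Then ∑_{j=1}^{m} a_j · [∏_{k=m+1}^{n} (a_j + a_k)] / [∏_{1≤i≤m, i≠j} (a_j - a_i)] = ∑_{j=1}^{n} a_j. -/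
open Finset Polynomial

/-- For `n = 2m - 1` and complex numbers `a_1, ..., a_n` with `a_1, ..., a_m` pairwise distinct,
`∑_{j=1}^{m} a_j ∏_{k=m+1}^{n} (a_j + a_k) / ∏_{1≤i≤m, i≠j} (a_j - a_i) = ∑_{j=1}^{n} a_j`. -/
theorem stmt2 (m : ℕ) (hm : 1 ≤ m) (a : ℕ → ℂ)
    (hdist : ∀ i ∈ Finset.Icc 1 m, ∀ j ∈ Finset.Icc 1 m, i ≠ j → a i ≠ a j) :
    ∑ j ∈ Finset.Icc 1 m,
        a j * (∏ k ∈ Finset.Icc (m + 1) (2 * m - 1), (a j + a k)) /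
          (∏ i ∈ (Finset.Icc 1 m).erase j, (a j - a i)) =
      ∑ j ∈ Finset.Icc 1 (2 * m - 1), a j := by
  classical
  set s : Finset ℕ := Finset.Icc 1 m with hs
  set t : Finset ℕ := Finset.Icc (m + 1) (2 * m - 1) with ht
  have hvs : Set.InjOn a s := by
    intro i hi j hj h
    by_contra hij
    exact hdist i (by simpa using hi) j (by simpa using hj) hij h
  have hcards : #s = m := by simp [hs]
  have hcardt : #t = m - 1 := by rw [ht, Nat.card_Icc]; omega
  set P : ℂ[X] := X * ∏ k ∈ t, (X + C (a k)) with hP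
  have hQmonic : (∏ k ∈ t, (X + C (a k))).Monic :=
    monic_prod_of_monic _ _ fun k _ => monic_X_add_C _
  have hPmonic : P.Monic := monic_X.mul hQmonic
  have hPdeg : P.natDegree = m := by
    rw [hP, natDegree_mul X_ne_zero hQmonic.ne_zero, natDegree_X,
      natDegree_prod _ _ (fun k _ => (monic_X_add_C (a k)).ne_zero)]
    simp only [natDegree_X_add_C, Finset.sum_const, smul_eq_mul, mul_one]
    omega
  have hNmonic : (Lagrange.nodal s a).Monic := Lagrange.nodal_monic
  have hNdeg : (Lagrange.nodal s a).natDegree = m := by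
    rw [Lagrange.natDegree_nodal, hcards]
  set g : ℂ[X] := P - Lagrange.nodal s a with hg
  have hdegeq : P.degree = (Lagrange.nodal s a).degree := by
    rw [degree_eq_natDegree hPmonic.ne_zero, degree_eq_natDegree hNmonic.ne_zero, hPdeg, hNdeg]
  have hgdeg : g.degree < (#s : ℕ) := by
    have h1 : g.degree < P.degree :=
      degree_sub_lt hdegeq hPmonic.ne_zero (by rw [hPmonic.leadingCoeff, hNmonic.leadingCoeff])
    rw [hcards]
    calc g.degree < P.degree := h1
      _ = (m : ℕ) := by rw [degree_eq_natDegree hPmonic.ne_zero, hPdeg]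
  have hinterp : g = Lagrange.interpolate s a (fun i => P.eval (a i)) := by
    apply Lagrange.eq_interpolate_of_eval_eq (v := a) (r := fun i => P.eval (a i)) hvs hgdeg
    intro i hi
    simp [hg, Lagrange.eval_nodal_at_node hi]
  -- coefficient of interpolation at m - 1
  have hbasis : ∀ j ∈ s, (Lagrange.basis s a j).coeff (m - 1) = Lagrange.nodalWeight s a j := by
    intro j hj
    have hb : Lagrange.basis s a j
        = C (Lagrange.nodalWeight s a j) * Lagrange.nodal (s.erase j) a := by
      rw [Lagrange.basis, Lagrange.nodalWeight, Lagrange.nodal]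
      simp_rw [Lagrange.basisDivisor]
      rw [Finset.prod_mul_distrib, map_prod]
    have hmon : (Lagrange.nodal (s.erase j) a).Monic := Lagrange.nodal_monic
    have hdeg : (Lagrange.nodal (s.erase j) a).natDegree = m - 1 := by
      rw [Lagrange.natDegree_nodal, Finset.card_erase_of_mem hj, hcards]
    rw [hb, coeff_C_mul, ← hdeg, hmon.coeff_natDegree, mul_one]
  have hcoeff : g.coeff (m - 1)
      = ∑ j ∈ s, P.eval (a j) * Lagrange.nodalWeight s a j := by
    rw [hinterp, Lagrange.interpolate_apply, finset_sum_coeff]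
    refine Finset.sum_congr rfl fun j hj => ?_
    rw [coeff_C_mul, hbasis j hj]
  -- compute coefficient of g directly
  have hPnext : P.nextCoeff = ∑ k ∈ t, a k := by
    rw [hP, monic_X.nextCoeff_mul hQmonic,
      Monic.nextCoeff_prod _ _ (fun k _ => monic_X_add_C _)]
    simp [nextCoeff, nextCoeff_X_add_C]
  have hNnext : (Lagrange.nodal s a).nextCoeff = -∑ i ∈ s, a i := by
    rw [Lagrange.nodal_eq, prod_X_sub_C_nextCoeff]
  have hcoeff2 : g.coeff (m - 1) = (∑ k ∈ t, a k) + ∑ i ∈ s, a i := by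
    rw [hg, coeff_sub, ← hPdeg, ← nextCoeff_of_natDegree_pos (by omega),
      hPdeg, ← hNdeg, ← nextCoeff_of_natDegree_pos (by omega), hPnext, hNnext]
    ring
  -- identify LHS with the coefficient sum
  have hLHS : ∑ j ∈ s, a j * (∏ k ∈ t, (a j + a k)) / (∏ i ∈ s.erase j, (a j - a i))
      = ∑ j ∈ s, P.eval (a j) * Lagrange.nodalWeight s a j := by
    refine Finset.sum_congr rfl fun j hj => ?_
    rw [Lagrange.nodalWeight, div_eq_mul_inv, ← Finset.prod_inv_distrib]
    congr 1
    simp [hP, eval_prod]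
  rw [hLHS, ← hcoeff, hcoeff2]
  -- split the RHS sum
  have hsplit : (∑ i ∈ s, a i) + ∑ k ∈ t, a k = ∑ j ∈ Finset.Icc 1 (2 * m - 1), a j := by
    rw [hs, ht]
    rw [show Finset.Icc 1 m = Finset.Ioc 0 m by rfl,
      Finset.Icc_add_one_left_eq_Ioc m (2 * m - 1),
      show Finset.Icc 1 (2 * m - 1) = Finset.Ioc 0 (2 * m - 1) by rfl]
    exact Finset.sum_Ioc_consecutive _ (by omega) (by omega)
  rw [← hsplit]; ring
end

section
/- Let e = (e_1, ..., e_n) be a vector of positive integers and let N_+(e), N_-(e) denote the number of even and odd entries of e respectively. If N_-(e) - N_+(e) ∉ {0, 1}, then f_n(e) = ∫_{Δ_n} det(x_i^{e_j-1}) dx = 0. -/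
open Finset MeasureTheory

/-- `f_n(e) = ∫_{Δ_n} det(x_i^{e_j - 1}) dx` where `Δ_n = {1 ≥ x_1 ≥ ... ≥ x_n ≥ -1}`. -/
noncomputable def fint (n : ℕ) (e : Fin n → ℕ) : ℝ :=
  ∫ x in {x : Fin n → ℝ | (∀ i, -1 ≤ x i ∧ x i ≤ 1) ∧ ∀ i j : Fin n, i ≤ j → x j ≤ x i},
    Matrix.det (Matrix.of fun i j => x i ^ (e j - 1))

/-!
Write `W(x) = ∏_{i<j} sgn(x_i - x_j)` (`vandermondeSign`). Both `W` and `det(x_i^{e_j-1})` are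
alternating in the coordinates, so their product `F` is symmetric, and whenever `g ∘ x` is a.e.
injective the integral of `F` over the cube `[-1,1]^n` is `n!` times its integral over the chamber
`g(x_1) > ... > g(x_n)`. For `g = id` we have `W = 1` on the chamber, so this is `n! f_n(e)`.
For `g = |·|` we have `W(x) = ∏_i sgn(x_i)^(n-i)` on the chamber; expanding the determinant into
monomials `∏_i x_i^(b_i)`, flipping the sign of `x_r` preserves the chamber and negates the
integrand as soon as `n - r + b_r` is odd. Such an `r` exists unless each `b_i` has the parity of
`n - i`, and that forces `N_-(e) = ⌈n/2⌉`, i.e. `N_-(e) - N_+(e) ∈ {0, 1}`.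
-/

namespace VandermondeIntegral

open SignType
open scoped Nat

variable {n : ℕ}

noncomputable def powDet (a : Fin n → ℕ) (x : Fin n → ℝ) : ℝ :=
  (Matrix.of fun i j => x i ^ a j).det

noncomputable def vandermondeSign (x : Fin n → ℝ) : ℝ :=
  ∏ i, ∏ j ∈ Ioi i, (sign (x i - x j) : ℝ)

theorem powDet_comp_perm (a : Fin n → ℕ) (x : Fin n → ℝ) (σ : Equiv.Perm (Fin n)) :
    powDet a (x ∘ σ) = σ.sign * powDet a x :=
  Matrix.det_permute σ (Matrix.of fun i j => x i ^ a j)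

theorem powDet_eq_sum (a : Fin n → ℕ) (x : Fin n → ℝ) :
    powDet a x = ∑ σ : Equiv.Perm (Fin n), σ.sign * ∏ i, x i ^ a (σ i) := by
  rw [powDet, ← Matrix.det_transpose, Matrix.det_apply']
  rfl

theorem continuous_powDet (a : Fin n → ℕ) : Continuous (powDet a) :=
  (continuous_matrix fun i _ => (continuous_apply i).pow _).matrix_det

theorem prod_Ioi_sub_eq_det_vandermonde (x : Fin n → ℝ) :
    ∏ i, ∏ j ∈ Ioi i, (x i - x j) = (Matrix.vandermonde (-x)).det := by
  simp only [Matrix.det_vandermonde, Pi.neg_apply, neg_sub_neg]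

theorem prod_Ioi_sub_comp_perm (x : Fin n → ℝ) (σ : Equiv.Perm (Fin n)) :
    ∏ i, ∏ j ∈ Ioi i, (x (σ i) - x (σ j)) = σ.sign * ∏ i, ∏ j ∈ Ioi i, (x i - x j) := by
  rw [prod_Ioi_sub_eq_det_vandermonde, prod_Ioi_sub_eq_det_vandermonde, ← Matrix.det_permute]
  rfl

theorem vandermondeSign_eq_sign_prod (x : Fin n → ℝ) :
    vandermondeSign x = (sign (∏ i, ∏ j ∈ Ioi i, (x i - x j)) : ℝ) := by
  let ψ : ℝ →*₀ ℝ := SignType.castHom.comp signHom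
  change ∏ i, ∏ j ∈ Ioi i, ψ (x i - x j) = ψ _
  simp only [map_prod]

theorem sign_units_intCast (u : ℤˣ) : (sign ((u : ℤ) : ℝ) : ℝ) = u := by
  rcases Int.units_eq_one_or u with rfl | rfl <;> simp

theorem vandermondeSign_comp_perm (x : Fin n → ℝ) (σ : Equiv.Perm (Fin n)) :
    vandermondeSign (x ∘ σ) = σ.sign * vandermondeSign x := by
  simp only [vandermondeSign_eq_sign_prod, Function.comp_apply, prod_Ioi_sub_comp_perm, sign_mul,
    SignType.coe_mul, sign_units_intCast]

theorem vandermondeSign_mul_powDet_comp_perm (a : Fin n → ℕ) (σ : Equiv.Perm (Fin n))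
    (x : Fin n → ℝ) :
    vandermondeSign (x ∘ σ) * powDet a (x ∘ σ) = vandermondeSign x * powDet a x := by
  rw [vandermondeSign_comp_perm, powDet_comp_perm, mul_mul_mul_comm, ← Int.cast_mul,
    ← Units.val_mul, Int.units_mul_self, Units.val_one, Int.cast_one, one_mul]

theorem vandermondeSign_eq_one_of_strictAnti {x : Fin n → ℝ} (hx : StrictAnti x) :
    vandermondeSign x = 1 :=
  prod_eq_one fun i _ => prod_eq_one fun j hj => by
    rw [sign_pos (sub_pos.2 (hx (mem_Ioi.1 hj))), SignType.coe_one]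

theorem sign_sub_of_abs_lt {a b : ℝ} (h : |b| < |a|) : sign (a - b) = sign a := by
  rcases lt_trichotomy a 0 with ha | rfl | ha
  · rw [abs_of_neg ha] at h
    rw [sign_neg ha, sign_neg (by linarith [neg_abs_le b])]
  · exact absurd h (by simp)
  · rw [abs_of_pos ha] at h
    rw [sign_pos ha, sign_pos (by linarith [le_abs_self b])]

theorem vandermondeSign_eq_prod_pow_of_strictAnti_abs {x : Fin n → ℝ}
    (hx : StrictAnti fun i => |x i|) :
    vandermondeSign x = ∏ i : Fin n, (sign (x i) : ℝ) ^ (n - 1 - i) := by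
  refine prod_congr rfl fun i _ => ?_
  rw [← Fin.card_Ioi, ← prod_const]
  exact prod_congr rfl fun j hj => by rw [sign_sub_of_abs_lt (hx (mem_Ioi.1 hj))]

theorem measurable_vandermondeSign : Measurable (vandermondeSign (n := n)) := by
  have hsign : Measurable fun r : ℝ => (sign r : ℝ) :=
    Monotone.measurable fun a b h => by
      have := SignType.sign.monotone h
      revert this
      cases sign a <;> cases sign b <;> simp
  exact Finset.measurable_prod _ fun i _ => Finset.measurable_prod _ fun j _ =>
    hsign.comp ((measurable_pi_apply i).sub (measurable_pi_apply j))

theorem abs_vandermondeSign_le (x : Fin n → ℝ) : |vandermondeSign x| ≤ 1 := by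
  rw [vandermondeSign, abs_prod]
  exact prod_le_one (fun _ _ => abs_nonneg _) fun i _ => by
    rw [abs_prod]
    exact prod_le_one (fun _ _ => abs_nonneg _) fun j _ => by
      cases sign (x i - x j) <;> simp

def chamber (g : ℝ → ℝ) : Set (Fin n → ℝ) := {x | StrictAnti (g ∘ x)}

theorem measurableSet_chamber {g : ℝ → ℝ} (hg : Measurable g) :
    MeasurableSet (chamber (n := n) g) := by
  have : chamber (n := n) g = ⋂ i, ⋂ j, ⋂ (_ : i < j), {x | g (x j) < g (x i)} := by
    ext x; simp [chamber, StrictAnti]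
  rw [this]
  exact .iInter fun i => .iInter fun j => .iInter fun _ =>
    measurableSet_lt (hg.comp (measurable_pi_apply j)) (hg.comp (measurable_pi_apply i))

theorem existsUnique_strictAnti_comp_perm {α : Type*} [LinearOrder α] {v : Fin n → α}
    (hv : Function.Injective v) : ∃! σ : Equiv.Perm (Fin n), StrictAnti (v ∘ σ) := by
  let w : Fin n → αᵒᵈ := OrderDual.toDual ∘ v
  have hw : ∀ σ : Equiv.Perm (Fin n), Monotone (w ∘ σ) ↔ StrictAnti (v ∘ σ) := fun σ =>
    monotone_toDual_comp_iff.trans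
      ⟨fun h => h.strictAnti_of_injective (hv.comp σ.injective), StrictAnti.antitone⟩
  refine ⟨Tuple.sort w, (hw _).1 (Tuple.monotone_sort w), fun τ hτ => ?_⟩
  have := Tuple.unique_monotone ((hw τ).2 hτ) (Tuple.monotone_sort w)
  exact Equiv.ext fun i => hv (OrderDual.toDual.injective (congrFun this i))

theorem measurePreserving_comp_perm (σ : Equiv.Perm (Fin n)) :
    MeasurePreserving (fun x : Fin n → ℝ => x ∘ σ) :=
  volume_preserving_arrowCongr' σ.symm (MeasurableEquiv.refl ℝ) (.id volume)

theorem measurableEmbedding_comp_perm (σ : Equiv.Perm (Fin n)) :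
    MeasurableEmbedding (fun x : Fin n → ℝ => x ∘ σ) :=
  (MeasurableEquiv.arrowCongr' σ.symm (MeasurableEquiv.refl ℝ)).measurableEmbedding

section Symmetrization

variable {g : ℝ → ℝ} {s : Set (Fin n → ℝ)} {F : (Fin n → ℝ) → ℝ}

theorem setIntegral_inter_preimage_chamber (hs : ∀ (σ : Equiv.Perm (Fin n)) x, x ∘ σ ∈ s ↔ x ∈ s)
    (hF : ∀ (σ : Equiv.Perm (Fin n)) x, F (x ∘ σ) = F x) (σ : Equiv.Perm (Fin n)) :
    ∫ x in s ∩ (· ∘ σ) ⁻¹' chamber g, F x = ∫ x in s ∩ chamber g, F x := by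
  have hpre : (· ∘ σ) ⁻¹' (s ∩ chamber g) = s ∩ (· ∘ σ) ⁻¹' chamber g := by
    ext x; simp [hs]
  have := (measurePreserving_comp_perm σ).setIntegral_preimage_emb
    (measurableEmbedding_comp_perm σ) F (s ∩ chamber g)
  simpa only [hpre, hF] using this

theorem setIntegral_eq_factorial_mul_setIntegral_chamber (hg : Measurable g)
    (hg_inj : ∀ᵐ x : Fin n → ℝ, Function.Injective (g ∘ x)) (hs_meas : MeasurableSet s)
    (hs : ∀ (σ : Equiv.Perm (Fin n)) x, x ∘ σ ∈ s ↔ x ∈ s)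
    (hF : ∀ (σ : Equiv.Perm (Fin n)) x, F (x ∘ σ) = F x) (hFs : IntegrableOn F s) :
    ∫ x in s, F x = n ! * ∫ x in s ∩ chamber g, F x := by
  set C : Equiv.Perm (Fin n) → Set (Fin n → ℝ) := fun σ => s ∩ (· ∘ σ) ⁻¹' chamber g
  have hC_meas : ∀ σ, MeasurableSet (C σ) := fun σ =>
    hs_meas.inter ((measurableSet_chamber hg).preimage (measurePreserving_comp_perm σ).measurable)
  have hC_disj : Pairwise (Function.onFun Disjoint C) := fun σ τ hστ =>
    Set.disjoint_left.2 fun x hσ hτ => by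
      have hσ' : StrictAnti ((g ∘ x) ∘ σ) := hσ.2
      have hτ' : StrictAnti ((g ∘ x) ∘ τ) := hτ.2
      exact hστ <| (existsUnique_strictAnti_comp_perm
        (hσ'.injective.of_comp_right σ.surjective)).unique hσ' hτ'
  have hC_cover : s =ᵐ[volume] ⋃ σ, C σ := by
    refine Filter.eventuallyEq_set.2 ?_
    filter_upwards [hg_inj] with x hx
    obtain ⟨σ, hσ⟩ := (existsUnique_strictAnti_comp_perm hx).exists
    exact ⟨fun h => Set.mem_iUnion.2 ⟨σ, h, hσ⟩, fun h => (Set.mem_iUnion.1 h).elim fun _ h => h.1⟩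
  rw [setIntegral_congr_set hC_cover,
    integral_iUnion_fintype hC_meas hC_disj fun σ => hFs.mono_set Set.inter_subset_left]
  simp only [C, setIntegral_inter_preimage_chamber hs hF, sum_const, card_univ,
    Fintype.card_perm, Fintype.card_fin, nsmul_eq_mul]

end Symmetrization

theorem volume_setOf_apply_eq_mul_apply {i j : Fin n} (hij : i ≠ j) (c : ℝ) :
    volume {x : Fin n → ℝ | x i = c * x j} = 0 := by
  let ψ : (Fin n → ℝ) →ₗ[ℝ] ℝ := LinearMap.proj i - c • LinearMap.proj j
  have hker : {x : Fin n → ℝ | x i = c * x j} = LinearMap.ker ψ := by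
    ext x; simp [ψ, sub_eq_zero]
  rw [hker]
  refine Measure.addHaar_submodule volume _ fun htop => ?_
  have : Pi.single i 1 ∈ LinearMap.ker ψ := htop ▸ Submodule.mem_top
  simp [ψ, hij.symm] at this

theorem ae_injective_abs : ∀ᵐ x : Fin n → ℝ, Function.Injective fun i => |x i| := by
  have h : ∀ i j : Fin n, ∀ᵐ x : Fin n → ℝ, |x i| = |x j| → i = j := by
    intro i j
    by_cases hij : i = j
    · exact ae_of_all _ fun _ _ => hij
    rw [ae_iff]
    refine measure_mono_null (fun x hx => ?_) (measure_union_null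
      (volume_setOf_apply_eq_mul_apply hij 1) (volume_setOf_apply_eq_mul_apply hij (-1)))
    have hx : |x i| = |x j| := by simpa [hij] using hx
    rcases abs_eq_abs.1 hx with h | h
    exacts [Or.inl (by simpa using h), Or.inr (by simpa using h)]
  filter_upwards [ae_all_iff.2 fun i => ae_all_iff.2 (h i)] with x hx i j using hx i j

theorem ae_injective : ∀ᵐ x : Fin n → ℝ, Function.Injective x :=
  ae_injective_abs.mono fun _ hx => hx.of_comp (f := abs)

theorem mem_Icc_neg_one_one_iff {x : Fin n → ℝ} : x ∈ Set.Icc (-1) 1 ↔ ∀ i, |x i| ≤ 1 := by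
  simp only [Set.mem_Icc, Pi.le_def, Pi.neg_apply, Pi.one_apply, abs_le, forall_and]

theorem comp_perm_mem_Icc_neg_one_one_iff (σ : Equiv.Perm (Fin n)) (x : Fin n → ℝ) :
    x ∘ σ ∈ Set.Icc (-1) 1 ↔ x ∈ Set.Icc (-1) 1 := by
  simp only [mem_Icc_neg_one_one_iff, Function.comp_apply]
  exact ⟨fun h i => by simpa using h (σ.symm i), fun h i => h (σ i)⟩

theorem integrableOn_vandermondeSign_mul {f : (Fin n → ℝ) → ℝ} (hf : Continuous f) :
    IntegrableOn (fun x => vandermondeSign x * f x) (Set.Icc (-1) 1) :=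
  hf.integrableOn_Icc.bdd_mul (c := 1) measurable_vandermondeSign.aestronglyMeasurable
    (ae_of_all _ fun x => abs_vandermondeSign_le x)

theorem setIntegral_eq_zero_of_comp_eq_neg {α : Type*} [MeasurableSpace α]
    {μ : Measure α} {ρ : α → α}
    (hρ : MeasurePreserving ρ μ μ) (hρ_emb : MeasurableEmbedding ρ) {s : Set α}
    (hs_meas : MeasurableSet s) (hs : ρ ⁻¹' s = s) {f : α → ℝ} (hf : ∀ x ∈ s, f (ρ x) = -f x) :
    ∫ x in s, f x ∂μ = 0 := by
  have h := hρ.setIntegral_preimage_emb hρ_emb f s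
  rw [hs, setIntegral_congr_fun hs_meas hf, integral_neg] at h
  linarith

def negAt (r : Fin n) (x : Fin n → ℝ) : Fin n → ℝ := fun i => if i = r then -x i else x i

theorem abs_negAt (r : Fin n) (x : Fin n → ℝ) (i : Fin n) : |negAt r x i| = |x i| := by
  unfold negAt; split_ifs <;> simp

theorem involutive_negAt (r : Fin n) : Function.Involutive (negAt r) := fun x => by
  ext i; unfold negAt; split_ifs <;> simp

theorem measurePreserving_negAt (r : Fin n) : MeasurePreserving (negAt r) := by
  have := volume_preserving_pi (f := fun i : Fin n => if i = r then (Neg.neg : ℝ → ℝ) else id)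
    fun i => by split_ifs; exacts [Measure.measurePreserving_neg volume, .id volume]
  convert this using 1
  ext x i
  unfold negAt; split_ifs <;> rfl

theorem measurableEmbedding_negAt (r : Fin n) : MeasurableEmbedding (negAt r) :=
  (MeasurableEquiv.ofInvolutive _ (involutive_negAt r)
    (measurePreserving_negAt r).measurable).measurableEmbedding

theorem sign_neg_pow_mul_neg_pow_of_odd_add {a b : ℕ} (hab : Odd (a + b)) (t : ℝ) :
    (sign (-t) : ℝ) ^ a * (-t) ^ b = -((sign t : ℝ) ^ a * t ^ b) := by
  have h := hab.neg_one_pow (α := ℝ)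
  rw [pow_add] at h
  rw [Left.sign_neg, SignType.coe_neg, neg_pow, neg_pow t]
  linear_combination ((sign t : ℝ) ^ a * t ^ b) * h

theorem setIntegral_vandermondeSign_mul_prod_pow_eq_zero (b : Fin n → ℕ) {r : Fin n}
    (hr : Odd (n - 1 - r + b r)) :
    ∫ x in Set.Icc (-1) 1 ∩ chamber abs, vandermondeSign x * ∏ i, x i ^ b i = 0 := by
  have hs : negAt r ⁻¹' (Set.Icc (-1) 1 ∩ chamber abs) = Set.Icc (-1) 1 ∩ chamber abs := by
    ext x
    have habs : abs ∘ negAt r x = abs ∘ x := funext (abs_negAt r x)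
    simp only [Set.mem_preimage, Set.mem_inter_iff, mem_Icc_neg_one_one_iff, abs_negAt, chamber,
      Set.mem_ofPred_eq, habs]
  refine setIntegral_eq_zero_of_comp_eq_neg (measurePreserving_negAt r)
    (measurableEmbedding_negAt r) (measurableSet_Icc.inter (measurableSet_chamber
    continuous_abs.measurable)) hs fun x hx => ?_
  have hx' : negAt r x ∈ Set.Icc (-1) 1 ∩ chamber abs := by rwa [← Set.mem_preimage, hs]
  have hfac : ∀ i, (sign (negAt r x i) : ℝ) ^ (n - 1 - i) * negAt r x i ^ b i =
      (if i = r then -1 else 1) * ((sign (x i) : ℝ) ^ (n - 1 - i) * x i ^ b i) := by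
    intro i
    unfold negAt
    split_ifs with h
    · subst h; rw [sign_neg_pow_mul_neg_pow_of_odd_add hr, neg_one_mul]
    · rw [one_mul]
  rw [vandermondeSign_eq_prod_pow_of_strictAnti_abs hx.2,
    vandermondeSign_eq_prod_pow_of_strictAnti_abs hx'.2, ← prod_mul_distrib,
    ← prod_mul_distrib, prod_congr rfl fun i _ => hfac i, prod_mul_distrib]
  simp

theorem card_filter_even_sub_one_sub : #{i : Fin n | Even (n - 1 - i)} = (n + 1) / 2 := by
  induction n with
  | zero => rfl
  | succ n ih =>
    have h : ∀ i : Fin n, n + 1 - 1 - ((i : ℕ) + 1) = n - 1 - i := fun i => by omega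
    rw [card_filter, Fin.sum_univ_succ]
    simp only [Fin.val_zero, Fin.val_succ, h]
    rw [← card_filter, ih]
    simp only [Nat.add_sub_cancel, Nat.sub_zero]
    rcases Nat.even_or_odd n with hn | hn
    · rw [if_pos hn]; obtain ⟨k, rfl⟩ := hn; omega
    · rw [if_neg (Nat.not_even_iff_odd.2 hn)]; obtain ⟨k, rfl⟩ := hn; omega

theorem exists_odd_add_of_card_filter_even_ne {a b : Fin n → ℕ}
    (h : #{i | Even (a i)} ≠ #{i | Even (b i)}) : ∃ r, Odd (a r + b r) := by
  by_contra! hab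
  exact h (congrArg card (filter_congr fun i _ => by
    simpa [Nat.even_add] using hab i))

theorem card_filter_comp_perm (p : Fin n → Prop) [DecidablePred p] (σ : Equiv.Perm (Fin n)) :
    #{i | p (σ i)} = #{i | p i} :=
  card_equiv σ fun i => by simp

theorem setIntegral_vandermondeSign_mul_powDet_eq_zero {a : Fin n → ℕ}
    (ha : #{i | Even (a i)} ≠ (n + 1) / 2) :
    ∫ x in Set.Icc (-1) 1 ∩ chamber abs, vandermondeSign x * powDet a x = 0 := by
  simp_rw [powDet_eq_sum, mul_sum, mul_left_comm (vandermondeSign _)]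
  rw [integral_finsetSum _ fun σ _ => ((integrableOn_vandermondeSign_mul (by fun_prop)).mono_set
    Set.inter_subset_left).const_mul _]
  refine sum_eq_zero fun σ _ => ?_
  have hσ : #{i : Fin n | Even (n - 1 - i)} ≠ #{i | Even (a (σ i))} := by
    rwa [card_filter_even_sub_one_sub, card_filter_comp_perm (fun i => Even (a i)), ne_comm]
  obtain ⟨r, hr⟩ := exists_odd_add_of_card_filter_even_ne hσ
  rw [integral_const_mul, setIntegral_vandermondeSign_mul_prod_pow_eq_zero _ hr, mul_zero]

theorem fint_eq_setIntegral_chamber_id (e : Fin n → ℕ) :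
    fint n e = ∫ x in Set.Icc (-1) 1 ∩ chamber id,
      vandermondeSign x * powDet (fun j => e j - 1) x := by
  rw [setIntegral_congr_fun (measurableSet_Icc.inter (measurableSet_chamber measurable_id))
    fun x hx => by rw [vandermondeSign_eq_one_of_strictAnti (x := x) hx.2, one_mul]]
  refine setIntegral_congr_set (Filter.eventuallyEq_set.2 ?_)
  filter_upwards [ae_injective] with x hx
  simp only [Set.mem_ofPred_eq, Set.mem_inter_iff, mem_Icc_neg_one_one_iff, abs_le, chamber,
    Function.id_comp]
  exact and_congr Iff.rfl
    ⟨fun h => Antitone.strictAnti_of_injective (fun i j hij => h i j hij) hx,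
      fun h i j hij => h.antitone hij⟩

theorem card_filter_even_sub_one_ne {e : Fin n → ℕ} (he : ∀ j, 0 < e j)
    (h : (#{j | Odd (e j)} : ℤ) - #{j | Even (e j)} ∉ ({0, 1} : Set ℤ)) :
    #{j | Even (e j - 1)} ≠ (n + 1) / 2 := by
  have hsub : #{j | Even (e j - 1)} = #{j | Odd (e j)} :=
    congrArg card (filter_congr fun j _ => by simp [Nat.even_sub (he j), parity_simps])
  have hsum := card_filter_add_card_filter_not (s := univ) fun j : Fin n => Odd (e j)
  simp only [Nat.not_odd_iff_even, card_univ, Fintype.card_fin] at hsum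
  simp only [Set.mem_insert_iff, Set.mem_singleton_iff, not_or] at h
  omega

end VandermondeIntegral

open VandermondeIntegral in
/-- If the number of odd entries minus the number of even entries of `e` is not `0` or `1`,
then `f_n(e) = 0`. -/
theorem stmt6 (n : ℕ) (e : Fin n → ℕ) (he : ∀ j, 0 < e j)
    (h : (((Finset.univ.filter fun j : Fin n => Odd (e j)).card : ℤ) -
        ((Finset.univ.filter fun j : Fin n => Even (e j)).card : ℤ)) ∉ ({0, 1} : Set ℤ)) :
    fint n e = 0 := by
  set a : Fin n → ℕ := fun j => e j - 1
  have hsymm : ∀ {g : ℝ → ℝ}, Measurable g → (∀ᵐ x : Fin n → ℝ, Function.Injective (g ∘ x)) →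
      ∫ x in Set.Icc (-1) 1, vandermondeSign x * powDet a x =
        n.factorial * ∫ x in Set.Icc (-1) 1 ∩ chamber g, vandermondeSign x * powDet a x :=
    fun hg hg_inj => setIntegral_eq_factorial_mul_setIntegral_chamber hg hg_inj measurableSet_Icc
      comp_perm_mem_Icc_neg_one_one_iff (vandermondeSign_mul_powDet_comp_perm a)
      (integrableOn_vandermondeSign_mul (continuous_powDet a))
  have h_id := hsymm measurable_id ae_injective
  have h_abs := hsymm continuous_abs.measurable ae_injective_abs
  rw [← fint_eq_setIntegral_chamber_id] at h_id
  rw [setIntegral_vandermondeSign_mul_powDet_eq_zero (card_filter_even_sub_one_ne he h),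
    mul_zero, h_id] at h_abs
  exact (mul_eq_zero.1 h_abs).resolve_left (Nat.cast_ne_zero.2 n.factorial_ne_zero)
end

section
/- The recursion f_n(e_1, ..., e_n) = (1/(e_1 + ⋯ + e_n)) · ∑_{j=1}^n ((-1)^{j+1} + (-1)^{j+n+e_j-1}) · f_{n-1}(e_1, ..., ê_j, ..., e_n) holds for positive integers e_1, ..., e_n, where ê_j means the entry e_j is omitted. -/
set_option maxHeartbeats 1000000

open Finset MeasureTheory Polynomial

/-- Antiderivative of a polynomial, normalized to vanish at `-1`. -/
noncomputable def intP (p : ℝ[X]) : ℝ[X] :=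
  (p.sum fun k a => C (a / (k+1)) * X^(k+1)) -
    C ((p.sum fun k a => C (a / (k+1)) * X^(k+1)).eval (-1))

lemma derivative_intP (p : ℝ[X]) : (intP p).derivative = p := by
  rw [intP, derivative_sub, derivative_C, sub_zero, Polynomial.sum, map_sum]
  conv_rhs => rw [← Polynomial.sum_C_mul_X_pow_eq p]
  rw [Polynomial.sum]
  refine Finset.sum_congr rfl fun k _ => ?_
  rw [derivative_C_mul_X_pow, Nat.add_sub_cancel]
  congr 2
  have : ((k:ℝ)+1) ≠ 0 := by positivity
  push_cast
  field_simp

lemma eval_intP_neg_one (p : ℝ[X]) : (intP p).eval (-1) = 0 := by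
  simp [intP]

lemma eval_intP (p : ℝ[X]) (b : ℝ) :
    (intP p).eval b = ∫ t in (-1:ℝ)..b, p.eval t := by
  have h : ∀ t ∈ Set.uIcc (-1:ℝ) b, HasDerivAt (fun x => (intP p).eval x) (p.eval t) t := by
    intro t _
    have := (intP p).hasDerivAt t
    rwa [derivative_intP] at this
  rw [intervalIntegral.integral_eq_sub_of_hasDerivAt h
    ((p.continuous.intervalIntegrable _ _)), eval_intP_neg_one, sub_zero]


/-- Polynomial version of the iterated integral with variable top limit. -/
noncomputable def g : (n : ℕ) → (Fin n → ℕ) → ℝ[X]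
  | 0, _ => 1
  | n+1, e => ∑ j : Fin (n+1), C ((-1:ℝ)^(j:ℕ)) * intP (X^(e j - 1) * g n (e ∘ j.succAbove))

lemma g_zero (e : Fin 0 → ℕ) : g 0 e = 1 := rfl

lemma g_succ (n : ℕ) (e : Fin (n+1) → ℕ) :
    g (n+1) e = ∑ j : Fin (n+1), C ((-1:ℝ)^(j:ℕ)) * intP (X^(e j - 1) * g n (e ∘ j.succAbove)) :=
  rfl

lemma eval_g_neg_one (n : ℕ) (e : Fin (n+1) → ℕ) : (g (n+1) e).eval (-1) = 0 := by
  rw [g_succ]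
  simp [eval_finset_sum, eval_intP_neg_one]

lemma derivative_g (n : ℕ) (e : Fin (n+1) → ℕ) :
    (g (n+1) e).derivative
      = ∑ j : Fin (n+1), C ((-1:ℝ)^(j:ℕ)) * (X^(e j - 1) * g n (e ∘ j.succAbove)) := by
  rw [g_succ, map_sum]
  exact Finset.sum_congr rfl fun j _ => by rw [derivative_mul, derivative_C, zero_mul, zero_add,
    derivative_intP]

lemma poly_ext {p q : ℝ[X]} (hd : p.derivative = q.derivative) (he : p.eval (-1) = q.eval (-1)) :
    p = q := by
  have h : (p - q).derivative = 0 := by rw [derivative_sub, hd, sub_self]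
  have h2 := Polynomial.natDegree_eq_zero_of_derivative_eq_zero h
  obtain ⟨c, hc⟩ := Polynomial.natDegree_eq_zero.mp h2
  have hc0 : c = 0 := by
    have := congrArg (Polynomial.eval (-1)) hc
    simp only [eval_C, eval_sub, he, sub_self] at this
    exact this
  have : p - q = 0 := by rw [← hc, hc0, map_zero]
  exact sub_eq_zero.mp this


lemma val_succAbove {m : ℕ} (j : Fin (m+1)) (k : Fin m) :
    ((j.succAbove k : Fin (m+1)) : ℕ) = if (k:ℕ) < (j:ℕ) then (k:ℕ) else (k:ℕ)+1 := by
  rcases lt_or_ge (k:ℕ) (j:ℕ) with h | h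
  · rw [Fin.succAbove_of_castSucc_lt _ _ (by simpa [Fin.lt_def] using h), if_pos h,
      Fin.coe_castSucc]
  · rw [Fin.succAbove_of_le_castSucc _ _ (by simpa [Fin.le_def] using h),
      if_neg (not_lt.2 h), Fin.val_succ]

/-- The position of `j` in the complement of `j.succAbove k`. -/
def pdx {n : ℕ} (j : Fin (n+2)) (k : Fin (n+1)) : Fin (n+1) :=
  if h : (k:ℕ) < (j:ℕ) then ⟨(j:ℕ) - 1, by omega⟩ else ⟨(j:ℕ), by have := k.isLt; omega⟩

lemma succAbove_pdx {n : ℕ} (j : Fin (n+2)) (k : Fin (n+1)) :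
    (j.succAbove k).succAbove (pdx j k) = j := by
  have hj := j.isLt; have hk := k.isLt
  apply Fin.ext
  rw [val_succAbove]
  rcases lt_or_ge (k:ℕ) (j:ℕ) with h | h
  · have h1 : ((j.succAbove k : Fin (n+2)) : ℕ) = (k:ℕ) := by rw [val_succAbove, if_pos h]
    have h2 : ((pdx j k : Fin (n+1)) : ℕ) = (j:ℕ) - 1 := by rw [pdx, dif_pos h]
    rw [h1, h2, if_neg (by omega)]
    omega
  · have h1 : ((j.succAbove k : Fin (n+2)) : ℕ) = (k:ℕ)+1 := by
      rw [val_succAbove, if_neg (not_lt.2 h)]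
    have h2 : ((pdx j k : Fin (n+1)) : ℕ) = (j:ℕ) := by rw [pdx, dif_neg (not_lt.2 h)]
    rw [h1, h2, if_pos (by omega)]

lemma pdx_pdx {n : ℕ} (j : Fin (n+2)) (k : Fin (n+1)) :
    pdx (j.succAbove k) (pdx j k) = k := by
  have h := succAbove_pdx (j.succAbove k) (pdx j k)
  rw [succAbove_pdx j k] at h
  exact Fin.succAbove_right_injective h

lemma pdx_vals {n : ℕ} (j : Fin (n+2)) (k : Fin (n+1)) :
    ((j.succAbove k : Fin (n+2)):ℕ) + ((pdx j k : Fin (n+1)):ℕ) + 1 = (j:ℕ) + (k:ℕ) ∨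
      ((j.succAbove k : Fin (n+2)):ℕ) + ((pdx j k : Fin (n+1)):ℕ) = (j:ℕ) + (k:ℕ) + 1 := by
  rw [val_succAbove, pdx]
  rcases lt_or_ge (k:ℕ) (j:ℕ) with h | h
  · rw [if_pos h, dif_pos h]; left; simp; omega
  · rw [if_neg (not_lt.2 h), dif_neg (not_lt.2 h)]; right; simp; omega

lemma range_succAbove_comp {n : ℕ} (a : Fin (n+2)) (k : Fin (n+1)) :
    Set.range (a.succAbove ∘ k.succAbove) = ({a, a.succAbove k} : Set (Fin (n+2)))ᶜ := by
  ext x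
  simp only [Set.mem_range, Function.comp_apply, Set.mem_compl_iff, Set.mem_insert_iff,
    Set.mem_singleton_iff, not_or]
  constructor
  · rintro ⟨i, rfl⟩
    exact ⟨Fin.succAbove_ne _ _, fun h => Fin.succAbove_ne k i (Fin.succAbove_right_injective h)⟩
  · rintro ⟨h1, h2⟩
    obtain ⟨y, rfl⟩ := Fin.exists_succAbove_eq h1
    have hyk : y ≠ k := fun h => h2 (by rw [h])
    obtain ⟨z, hz⟩ := Fin.exists_succAbove_eq hyk
    exact ⟨z, by rw [hz]⟩

lemma succAbove_comp_pdx {n : ℕ} (j : Fin (n+2)) (k : Fin (n+1)) :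
    j.succAbove ∘ k.succAbove = (j.succAbove k).succAbove ∘ (pdx j k).succAbove := by
  have hm1 : StrictMono (j.succAbove ∘ k.succAbove) := fun a b hab =>
    Fin.strictMono_succAbove j (Fin.strictMono_succAbove k hab)
  have hm2 : StrictMono ((j.succAbove k).succAbove ∘ (pdx j k).succAbove) := fun a b hab =>
    Fin.strictMono_succAbove _ (Fin.strictMono_succAbove _ hab)
  refine (hm1.range_inj hm2).1 ?_
  rw [range_succAbove_comp, range_succAbove_comp, succAbove_pdx]
  congr 1
  exact Set.pair_comm _ _


lemma neg_one_pow_congr' (a b : ℕ) (h : a % 2 = b % 2) : (-1:ℝ)^a = (-1)^b := by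
  rw [← Nat.div_add_mod a 2, ← Nat.div_add_mod b 2, pow_add, pow_add, pow_mul, pow_mul]
  norm_num [h]

lemma swap_sum (n : ℕ) (e : Fin (n+2) → ℕ) :
    ∑ j : Fin (n+2), ∑ k : Fin (n+1),
        C ((-1:ℝ)^(j:ℕ) * (-1:ℝ)^(n + (k:ℕ) + e (j.succAbove k) + 1)) *
          (X^(e j - 1) * g n (e ∘ j.succAbove ∘ k.succAbove))
      = ∑ j : Fin (n+2), ∑ k : Fin (n+1),
          C ((-1:ℝ)^((n+1) + (j:ℕ) + e j + 1) * (-1:ℝ)^(k:ℕ)) *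
            (X^(e (j.succAbove k) - 1) * g n (e ∘ j.succAbove ∘ k.succAbove)) := by
  rw [← Finset.sum_product', ← Finset.sum_product']
  refine Finset.sum_nbij' (i := fun p => (p.1.succAbove p.2, pdx p.1 p.2))
    (j := fun p => (p.1.succAbove p.2, pdx p.1 p.2)) ?_ ?_ ?_ ?_ ?_
  · intro a _; exact Finset.mem_univ _
  · intro a _; exact Finset.mem_univ _
  · intro a _
    exact Prod.ext (succAbove_pdx a.1 a.2) (pdx_pdx a.1 a.2)
  · intro a _
    exact Prod.ext (succAbove_pdx a.1 a.2) (pdx_pdx a.1 a.2)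
  · intro a _
    obtain ⟨j, k⟩ := a
    dsimp only
    rw [succAbove_pdx, ← succAbove_comp_pdx]
    congr 2
    rw [← pow_add, ← pow_add]
    refine neg_one_pow_congr' _ _ ?_
    rcases pdx_vals j k with h | h <;> omega


lemma keyP : ∀ (n : ℕ) (e : Fin (n+1) → ℕ), (∀ j, 0 < e j) →
    C (∑ j, (e j : ℝ)) * g (n+1) e =
      ∑ j : Fin (n+1), (C ((-1:ℝ)^(j:ℕ)) * X^(e j) + C ((-1:ℝ)^(n + (j:ℕ) + e j + 1))) *
        g n (e ∘ j.succAbove) := by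
  intro n
  induction n with
  | zero =>
    intro e he
    apply poly_ext
    · rw [derivative_mul, derivative_C, zero_mul, zero_add, derivative_g]
      rw [derivative_sum]
      simp only [Fin.sum_univ_one, Fin.val_zero, pow_zero, map_one, one_mul, g_zero, mul_one,
        derivative_add, derivative_mul, derivative_C, zero_mul, zero_add, add_zero,
        derivative_X_pow, derivative_one, mul_zero]
      rw [Finset.mul_sum]
      refine Finset.sum_congr rfl fun x _ => ?_
      have hx : x = 0 := Fin.fin_one_eq_zero x
      subst hx
      rw [show (∑ j : Fin (0+1), ((e j : ℝ))) = (e 0 : ℝ) from Fin.sum_univ_one _]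
      ring
    · rw [eval_mul, eval_g_neg_one, mul_zero, eval_finset_sum]
      refine (Finset.sum_eq_zero fun x _ => ?_).symm
      have hx : x = 0 := Fin.fin_one_eq_zero x
      subst hx
      rw [g_zero, mul_one, eval_add, eval_C, eval_mul, eval_C, eval_pow, eval_X]
      norm_num
      rw [pow_succ]
      ring
  | succ n IH =>
    intro e he
    apply poly_ext
    · rw [derivative_mul, derivative_C, zero_mul, zero_add, derivative_g, Finset.mul_sum,
        derivative_sum]
      have hrhs : ∀ j : Fin (n+2),
          derivative ((C ((-1:ℝ)^(j:ℕ)) * X^(e j) + C ((-1:ℝ)^((n+1) + (j:ℕ) + e j + 1))) *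
            g (n+1) (e ∘ j.succAbove))
          = C ((e j : ℝ)) * (C ((-1:ℝ)^(j:ℕ)) * (X^(e j - 1) * g (n+1) (e ∘ j.succAbove)))
            + (C ((-1:ℝ)^(j:ℕ)) * X^(e j) + C ((-1:ℝ)^((n+1) + (j:ℕ) + e j + 1))) *
              ∑ k : Fin (n+1), C ((-1:ℝ)^(k:ℕ)) *
                (X^(e (j.succAbove k) - 1) * g n ((e ∘ j.succAbove) ∘ k.succAbove)) := by
        intro j
        rw [derivative_mul, derivative_add, derivative_C, add_zero, derivative_mul,
          derivative_C, zero_mul, zero_add, derivative_X_pow, derivative_g]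
        congr 1
        ring
      rw [Finset.sum_congr rfl fun j _ => hrhs j]
      have h1 : ∀ j : Fin (n+2),
          C (∑ i, ((e i : ℝ))) * (C ((-1:ℝ)^(j:ℕ)) * (X^(e j - 1) * g (n+1) (e ∘ j.succAbove)))
          = C ((e j : ℝ)) * (C ((-1:ℝ)^(j:ℕ)) * (X^(e j - 1) * g (n+1) (e ∘ j.succAbove)))
            + ∑ k : Fin (n+1),
              (C ((-1:ℝ)^(j:ℕ) * (-1:ℝ)^(k:ℕ)) *
                  (X^((e j - 1) + e (j.succAbove k)) * g n (e ∘ j.succAbove ∘ k.succAbove))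
                + C ((-1:ℝ)^(j:ℕ) * (-1:ℝ)^(n + (k:ℕ) + e (j.succAbove k) + 1)) *
                  (X^(e j - 1) * g n (e ∘ j.succAbove ∘ k.succAbove))) := by
        intro j
        have hsplit : (C (∑ i, ((e i : ℝ))) : ℝ[X])
            = C ((e j : ℝ)) + C (∑ k : Fin (n+1), ((e (j.succAbove k) : ℝ))) := by
          rw [← map_add]
          congr 1
          exact Fin.sum_univ_succAbove (fun i => ((e i : ℝ))) j
        rw [hsplit, add_mul]
        congr 1
        have hcomm : C (∑ k : Fin (n+1), ((e (j.succAbove k) : ℝ))) *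
            (C ((-1:ℝ)^(j:ℕ)) * (X^(e j - 1) * g (n+1) (e ∘ j.succAbove)))
            = C ((-1:ℝ)^(j:ℕ)) * (X^(e j - 1) *
              (C (∑ k : Fin (n+1), (((e ∘ j.succAbove) k : ℝ))) * g (n+1) (e ∘ j.succAbove))) := by
          simp only [Function.comp_apply]
          ring
        rw [hcomm, IH (e ∘ j.succAbove) (fun k => he _), Finset.mul_sum, Finset.mul_sum]
        refine Finset.sum_congr rfl fun k _ => ?_
        simp only [Function.comp_apply, Function.comp_assoc, map_mul, pow_add]
        ring
      rw [Finset.sum_congr rfl fun j _ => h1 j]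
      have h2 : ∀ j : Fin (n+2),
          (C ((-1:ℝ)^(j:ℕ)) * X^(e j) + C ((-1:ℝ)^((n+1) + (j:ℕ) + e j + 1))) *
              ∑ k : Fin (n+1), C ((-1:ℝ)^(k:ℕ)) *
                (X^(e (j.succAbove k) - 1) * g n ((e ∘ j.succAbove) ∘ k.succAbove))
          = ∑ k : Fin (n+1),
              (C ((-1:ℝ)^(j:ℕ) * (-1:ℝ)^(k:ℕ)) *
                  (X^(e j + (e (j.succAbove k) - 1)) * g n (e ∘ j.succAbove ∘ k.succAbove))
                + C ((-1:ℝ)^((n+1) + (j:ℕ) + e j + 1) * (-1:ℝ)^(k:ℕ)) *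
                  (X^(e (j.succAbove k) - 1) * g n (e ∘ j.succAbove ∘ k.succAbove))) := by
        intro j
        rw [Finset.mul_sum]
        refine Finset.sum_congr rfl fun k _ => ?_
        simp only [Function.comp_assoc, map_mul, pow_add]
        ring
      rw [Finset.sum_congr rfl fun j _ => congrArg _ (h2 j)]
      rw [Finset.sum_add_distrib, Finset.sum_add_distrib]
      congr 1
      simp only [Finset.sum_add_distrib]
      congr 1
      · refine Finset.sum_congr rfl fun j _ => Finset.sum_congr rfl fun k _ => ?_
        have : (e j - 1) + e (j.succAbove k) = e j + (e (j.succAbove k) - 1) := by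
          have := he j; have := he (j.succAbove k); omega
        rw [this]
      · exact swap_sum n e
    · simp only [eval_mul, eval_g_neg_one, mul_zero, eval_finset_sum]
      refine (Finset.sum_eq_zero fun j _ => ?_).symm
      rfl


def Sset (n : ℕ) (b : ℝ) : Set (Fin n → ℝ) :=
  {x | (∀ i, -1 ≤ x i ∧ x i ≤ b) ∧ ∀ i j : Fin n, i ≤ j → x j ≤ x i}

lemma isClosed_Sset (n : ℕ) (b : ℝ) : IsClosed (Sset n b) := by
  have h : Sset n b = (⋂ i, {x : Fin n → ℝ | -1 ≤ x i} ∩ {x : Fin n → ℝ | x i ≤ b}) ∩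
      ⋂ i, ⋂ j, ⋂ (_ : i ≤ j), {x : Fin n → ℝ | x j ≤ x i} := by
    ext x
    simp only [Sset, Set.mem_setOf_eq, Set.mem_inter_iff, Set.mem_iInter, Set.mem_inter_iff,
      Set.mem_setOf_eq]
  rw [h]
  refine IsClosed.inter (isClosed_iInter fun i => IsClosed.inter ?_ ?_)
    (isClosed_iInter fun i => isClosed_iInter fun j => isClosed_iInter fun _ => ?_)
  · exact isClosed_le continuous_const (continuous_apply i)
  · exact isClosed_le (continuous_apply i) continuous_const
  · exact isClosed_le (continuous_apply j) (continuous_apply i)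

lemma isCompact_Sset (n : ℕ) (b : ℝ) : IsCompact (Sset n b) := by
  refine IsCompact.of_isClosed_subset
    (isCompact_univ_pi (s := fun _ : Fin n => Set.Icc (-1:ℝ) b) fun _ => isCompact_Icc)
    (isClosed_Sset n b) fun x hx => ?_
  intro i _
  exact ⟨(hx.1 i).1, (hx.1 i).2⟩

lemma measurableSet_Sset (n : ℕ) (b : ℝ) : MeasurableSet (Sset n b) :=
  (isClosed_Sset n b).measurableSet

lemma cont_det (m : ℕ) (e : Fin m → ℕ) :
    Continuous fun x : Fin m → ℝ => Matrix.det (Matrix.of fun i j => x i ^ (e j - 1)) := by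
  apply Continuous.matrix_det
  apply continuous_matrix
  intro i j
  exact (continuous_apply i).pow _

lemma mem_Sset_cons {n : ℕ} (a : ℝ) (z : Fin n → ℝ) (b : ℝ) :
    (Fin.cons a z : Fin (n+1) → ℝ) ∈ Sset (n+1) b ↔ (a ∈ Set.Icc (-1:ℝ) b ∧ z ∈ Sset n a) := by
  constructor
  · rintro ⟨h1, h2⟩
    have ha := h1 0
    rw [Fin.cons_zero] at ha
    refine ⟨⟨ha.1, ha.2⟩, fun i => ⟨?_, ?_⟩, fun i j hij => ?_⟩
    · have := (h1 i.succ).1; rwa [Fin.cons_succ] at this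
    · have := h2 0 i.succ (Fin.zero_le _)
      rwa [Fin.cons_zero, Fin.cons_succ] at this
    · have := h2 i.succ j.succ (Fin.succ_le_succ_iff.mpr hij)
      rwa [Fin.cons_succ, Fin.cons_succ] at this
  · rintro ⟨⟨ha1, ha2⟩, hz1, hz2⟩
    constructor
    · intro i
      refine Fin.cases ?_ (fun i' => ?_) i
      · rw [Fin.cons_zero]; exact ⟨ha1, ha2⟩
      · rw [Fin.cons_succ]
        exact ⟨(hz1 i').1, le_trans (hz1 i').2 ha2⟩
    · intro i j
      refine Fin.cases ?_ (fun i' => ?_) i <;> refine Fin.cases ?_ (fun j' => ?_) j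
      all_goals intro h
      · exact le_refl _
      · rw [Fin.cons_zero, Fin.cons_succ]; exact (hz1 j').2
      · exact absurd (Fin.le_zero_iff.mp h) (Fin.succ_ne_zero i')
      · rw [Fin.cons_succ, Fin.cons_succ]
        exact hz2 i' j' (Fin.succ_le_succ_iff.mp h)

def Pset (n : ℕ) (b : ℝ) : Set (ℝ × (Fin n → ℝ)) :=
  {p | p.1 ∈ Set.Icc (-1:ℝ) b ∧ p.2 ∈ Sset n p.1}

lemma isClosed_Pset (n : ℕ) (b : ℝ) : IsClosed (Pset n b) := by
  have h : Pset n b = ({p : ℝ × (Fin n → ℝ) | -1 ≤ p.1} ∩ {p | p.1 ≤ b}) ∩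
      ((⋂ i, {p : ℝ × (Fin n → ℝ) | -1 ≤ p.2 i} ∩ {p | p.2 i ≤ p.1}) ∩
        ⋂ i, ⋂ j, ⋂ (_ : i ≤ j), {p : ℝ × (Fin n → ℝ) | p.2 j ≤ p.2 i}) := by
    ext p
    simp only [Pset, Sset, Set.mem_setOf_eq, Set.mem_inter_iff, Set.mem_iInter, Set.mem_Icc,
      Set.mem_setOf_eq]
  rw [h]
  have hc1 : Continuous fun p : ℝ × (Fin n → ℝ) => p.1 := continuous_fst
  have hc2 : ∀ i : Fin n, Continuous fun p : ℝ × (Fin n → ℝ) => p.2 i := fun i =>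
    (continuous_apply i).comp continuous_snd
  refine IsClosed.inter (IsClosed.inter ?_ ?_) (IsClosed.inter (isClosed_iInter fun i =>
    IsClosed.inter ?_ ?_) (isClosed_iInter fun i => isClosed_iInter fun j =>
      isClosed_iInter fun _ => ?_))
  · exact isClosed_le continuous_const hc1
  · exact isClosed_le hc1 continuous_const
  · exact isClosed_le continuous_const (hc2 i)
  · exact isClosed_le (hc2 i) hc1
  · exact isClosed_le (hc2 j) (hc2 i)

lemma isCompact_Pset (n : ℕ) (b : ℝ) : IsCompact (Pset n b) := by
  refine IsCompact.of_isClosed_subset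
    ((isCompact_Icc (a := (-1:ℝ)) (b := b)).prod
      (isCompact_univ_pi (s := fun _ : Fin n => Set.Icc (-1:ℝ) b) fun _ => isCompact_Icc))
    (isClosed_Pset n b) fun p hp => ?_
  refine Set.mem_prod.2 ⟨hp.1, ?_⟩
  intro i _
  exact ⟨(hp.2.1 i).1, le_trans (hp.2.1 i).2 hp.1.2⟩

lemma measurableSet_Pset (n : ℕ) (b : ℝ) : MeasurableSet (Pset n b) :=
  (isClosed_Pset n b).measurableSet


lemma Fmain : ∀ (n : ℕ) (e : Fin n → ℕ) (b : ℝ), -1 ≤ b →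
    ∫ x in Sset n b, Matrix.det (Matrix.of fun i j => x i ^ (e j - 1)) = (g n e).eval b := by
  intro n
  induction n with
  | zero =>
    intro e b _
    have h1 : Sset 0 b = Set.univ := by
      ext x
      simp [Sset]
    rw [h1, setIntegral_univ]
    have h2 : ∀ x : Fin 0 → ℝ, Matrix.det (Matrix.of fun i j => x i ^ (e j - 1)) = 1 := by
      intro x
      exact Matrix.det_fin_zero
    rw [integral_congr_ae (Filter.Eventually.of_forall h2), integral_const, g_zero, eval_one]
    rw [smul_eq_mul, mul_one]
    have : (volume : Measure (Fin 0 → ℝ)) Set.univ = 1 := by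
      rw [MeasureTheory.volume_pi, Measure.pi_univ]
      simp
    rw [measureReal_def, this]
    simp
  | succ n IH =>
    intro e b hb
    -- the continuous integrand on the product space
    set F : ℝ × (Fin n → ℝ) → ℝ := fun p =>
      Matrix.det (Matrix.of fun i j => (Fin.cons p.1 p.2 : Fin (n+1) → ℝ) i ^ (e j - 1)) with hF
    have hFcont : Continuous F := by
      have hcons : Continuous fun p : ℝ × (Fin n → ℝ) => (Fin.cons p.1 p.2 : Fin (n+1) → ℝ) := by
        apply continuous_pi
        intro i
        refine Fin.cases ?_ (fun i' => ?_) i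
        · exact continuous_fst
        · exact (continuous_apply i').comp continuous_snd
      exact (cont_det (n+1) e).comp hcons
    -- step 1 : transfer to the product space
    have T := MeasurableEquiv.piFinSuccAbove (fun _ : Fin (n+1) => ℝ) 0
    have hmp : MeasurePreserving (MeasurableEquiv.piFinSuccAbove (fun _ : Fin (n+1) => ℝ) 0) :=
      volume_preserving_piFinSuccAbove (fun _ : Fin (n+1) => ℝ) 0
    have himg : (MeasurableEquiv.piFinSuccAbove (fun _ : Fin (n+1) => ℝ) 0) '' Sset (n+1) b
        = Pset n b := by
      rw [MeasurableEquiv.image_eq_preimage_symm]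
      ext p
      have hsymm : (MeasurableEquiv.piFinSuccAbove (fun _ : Fin (n+1) => ℝ) 0).symm p
          = Fin.cons p.1 p.2 := by
        simp [MeasurableEquiv.piFinSuccAbove]
        rfl
      simp only [Set.mem_preimage, hsymm]
      exact mem_Sset_cons p.1 p.2 b
    have hstep1 : ∫ x in Sset (n+1) b, Matrix.det (Matrix.of fun i j => x i ^ (e j - 1))
        = ∫ p in Pset n b, F p := by
      rw [← himg, hmp.setIntegral_image_emb
        (MeasurableEquiv.piFinSuccAbove (fun _ : Fin (n+1) => ℝ) 0).measurableEmbedding]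
      refine setIntegral_congr_fun (measurableSet_Sset (n+1) b) fun x _ => ?_
      show _ = F _
      rw [hF]
      have hx : (Fin.cons (x 0) (fun j => x ((0:Fin (n+1)).succAbove j)) : Fin (n+1) → ℝ) = x := by
        simp only [Fin.zero_succAbove]
        exact Fin.cons_self_tail x
      show _ = Matrix.det (Matrix.of fun i j =>
        (Fin.cons (x 0) (fun k => x ((0:Fin (n+1)).succAbove k)) : Fin (n+1) → ℝ) i ^ (e j - 1))
      rw [hx]
    rw [hstep1, ← integral_indicator (measurableSet_Pset n b)]
    have hInt : Integrable ((Pset n b).indicator F) := by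
      rw [integrable_indicator_iff (measurableSet_Pset n b)]
      exact hFcont.continuousOn.integrableOn_compact (isCompact_Pset n b)
    rw [MeasureTheory.Measure.volume_eq_prod] at hInt ⊢
    rw [MeasureTheory.integral_prod _ hInt]
    have hfun : ∀ a : ℝ, (∫ z, (Pset n b).indicator F (a, z))
        = Set.indicator (Set.Icc (-1:ℝ) b) (fun a => ∫ z in Sset n a, F (a, z)) a := by
      intro a
      by_cases ha : a ∈ Set.Icc (-1:ℝ) b
      · rw [Set.indicator_of_mem ha]
        have hz : ∀ z, (Pset n b).indicator F (a, z)
            = (Sset n a).indicator (fun z => F (a, z)) z := by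
          intro z
          by_cases hzz : z ∈ Sset n a
          · rw [Set.indicator_of_mem (show ((a,z) : ℝ × (Fin n → ℝ)) ∈ Pset n b from ⟨ha, hzz⟩),
              Set.indicator_of_mem hzz]
          · rw [Set.indicator_of_notMem (fun hmem => hzz hmem.2),
              Set.indicator_of_notMem hzz]
        rw [integral_congr_ae (Filter.Eventually.of_forall hz),
          integral_indicator (measurableSet_Sset n a)]
      · rw [Set.indicator_of_notMem ha]
        have hz : ∀ z : Fin n → ℝ, (Pset n b).indicator F (a, z) = 0 := fun z =>
          Set.indicator_of_notMem (fun hmem => ha hmem.1) F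
        rw [integral_congr_ae (Filter.Eventually.of_forall hz), integral_zero]
    rw [integral_congr_ae (Filter.Eventually.of_forall hfun),
      integral_indicator measurableSet_Icc]
    have hexp : ∀ a ∈ Set.Icc (-1:ℝ) b, (∫ z in Sset n a, F (a, z))
        = ∑ j : Fin (n+1), (-1:ℝ)^(j:ℕ) * a^(e j - 1) * (g n (e ∘ j.succAbove)).eval a := by
      intro a ha
      have hdet : ∀ z : Fin n → ℝ, F (a, z) = ∑ j : Fin (n+1), (-1:ℝ)^(j:ℕ) * a^(e j - 1) *
          Matrix.det (Matrix.of fun i k => z i ^ ((e ∘ j.succAbove) k - 1)) := by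
        intro z
        rw [hF]
        dsimp only
        rw [Matrix.det_succ_row_zero]
        refine Finset.sum_congr rfl fun j _ => ?_
        have h0 : (Matrix.of fun i j => (Fin.cons a z : Fin (n+1) → ℝ) i ^ (e j - 1)) 0 j
            = a ^ (e j - 1) := by
          show (Fin.cons a z : Fin (n+1) → ℝ) 0 ^ (e j - 1) = _
          rw [Fin.cons_zero]
        have h1 : ((Matrix.of fun i j => (Fin.cons a z : Fin (n+1) → ℝ) i ^ (e j - 1)).submatrix
            Fin.succ j.succAbove) = Matrix.of fun i k => z i ^ ((e ∘ j.succAbove) k - 1) := by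
          ext i k
          show (Fin.cons a z : Fin (n+1) → ℝ) (Fin.succ i) ^ (e (j.succAbove k) - 1) = _
          rw [Fin.cons_succ]
          rfl
        rw [h0, h1]
      rw [setIntegral_congr_fun (measurableSet_Sset n a) (fun z _ => hdet z)]
      rw [integral_finset_sum _ (fun j _ => (((cont_det n
        (e ∘ j.succAbove)).continuousOn.integrableOn_compact
          (isCompact_Sset n a)).const_mul _))]
      refine Finset.sum_congr rfl fun j _ => ?_
      rw [MeasureTheory.integral_const_mul, IH (e ∘ j.succAbove) a ha.1]
    rw [setIntegral_congr_fun measurableSet_Icc hexp]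
    have hic : ∀ j : Fin (n+1), IntegrableOn
        (fun a : ℝ => (-1:ℝ)^(j:ℕ) * a^(e j - 1) * (g n (e ∘ j.succAbove)).eval a)
        (Set.Icc (-1) b) := by
      intro j
      apply Continuous.integrableOn_Icc
      exact ((continuous_const.mul (continuous_pow _)).mul (g n (e ∘ j.succAbove)).continuous)
    rw [integral_finset_sum _ (fun j _ => hic j)]
    rw [g_succ, eval_finset_sum]
    refine Finset.sum_congr rfl fun j _ => ?_
    rw [eval_mul, eval_C, eval_intP]
    rw [integral_Icc_eq_integral_Ioc, ← intervalIntegral.integral_of_le hb]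
    have : ∀ t : ℝ, (-1:ℝ)^(j:ℕ) * t^(e j - 1) * (g n (e ∘ j.succAbove)).eval t
        = (-1:ℝ)^(j:ℕ) * (X^(e j - 1) * g n (e ∘ j.succAbove)).eval t := by
      intro t
      rw [eval_mul, eval_pow, eval_X]
      ring
    rw [intervalIntegral.integral_congr (fun t _ => this t)]
    rw [intervalIntegral.integral_const_mul]


lemma fint_eq (n : ℕ) (e : Fin n → ℕ) :
    fint n e = ∫ x in Sset n 1, Matrix.det (Matrix.of fun i j => x i ^ (e j - 1)) := rfl

/-- The recursion
`f_n(e) = (1/∑ e_j) ∑_j ((-1)^{j+1} + (-1)^{j+n+e_j-1}) f_{n-1}(e_1, ..., ê_j, ..., e_n)`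
(here stated with `n` replaced by `n+1`, and `j` the 1-based index of the omitted entry). -/
theorem stmt8 (n : ℕ) (e : Fin (n + 1) → ℕ) (he : ∀ j, 0 < e j) :
    fint (n + 1) e = (1 / ∑ j : Fin (n + 1), (e j : ℝ)) *
      ∑ j : Fin (n + 1),
        (((-1 : ℝ) ^ (((j : ℕ) + 1) + 1) +
            (-1 : ℝ) ^ (((j : ℕ) + 1) + (n + 1) + e j - 1)) *
          fint n (e ∘ j.succAbove)) := by
  have hfint : fint (n+1) e = (g (n+1) e).eval 1 := by
    rw [fint_eq]
    exact Fmain (n+1) e 1 (by norm_num)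
  have hfn : ∀ j : Fin (n+1), fint n (e ∘ j.succAbove) = (g n (e ∘ j.succAbove)).eval 1 := by
    intro j
    rw [fint_eq]
    exact Fmain n (e ∘ j.succAbove) 1 (by norm_num)
  have hkey := congrArg (Polynomial.eval (1:ℝ)) (keyP n e he)
  rw [eval_mul, eval_C, eval_finset_sum] at hkey
  have hS : (0:ℝ) < ∑ j : Fin (n+1), (e j : ℝ) := by
    refine Finset.sum_pos (fun j _ => by exact_mod_cast he j) ⟨0, Finset.mem_univ 0⟩
  have hsum : ∑ j : Fin (n+1), (((-1 : ℝ) ^ (((j : ℕ) + 1) + 1) +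
        (-1 : ℝ) ^ (((j : ℕ) + 1) + (n + 1) + e j - 1)) * fint n (e ∘ j.succAbove))
      = ∑ j : Fin (n+1), Polynomial.eval 1
          ((C ((-1:ℝ)^(j:ℕ)) * X^(e j) + C ((-1:ℝ)^(n + (j:ℕ) + e j + 1))) *
            g n (e ∘ j.succAbove)) := by
    refine Finset.sum_congr rfl fun j _ => ?_
    rw [hfn j, eval_mul, eval_add, eval_mul, eval_C, eval_C, eval_pow, eval_X, one_pow, mul_one]
    congr 2
    · rw [show ((j:ℕ)+1)+1 = (j:ℕ)+2 from rfl, pow_add]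
      norm_num
    · congr 1
      have := he j
      omega
  rw [hfint, hsum, ← hkey, one_div, ← mul_assoc, inv_mul_cancel₀ hS.ne', one_mul]
end

section
/- For real a > -1 and Re(s) > -1, the function u(s,a,0) = ∫_0^1 x^s(1+x)^a dx satisfies u(s, a, 0) = 2^{a+1}/(s+1) − (1 + (a+1)/(s+1)) · u(s+1, a, 0). -/
/-!
Differentiating `x ^ (s + 1) * (1 + x) ^ (a + 1)` and integrating over `[0, 1]` gives
`2 ^ (a + 1) = (s + 1) u(s, a + 1, 0) + (a + 1) u(s + 1, a, 0)`, and splitting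
`(1 + x) ^ (a + 1) = (1 + x) ^ a + x (1 + x) ^ a` gives
`u(s, a + 1, 0) = u(s, a, 0) + u(s + 1, a, 0)`. Eliminating `u(s, a + 1, 0)` and dividing by
`s + 1` yields the recurrence.
-/

open MeasureTheory intervalIntegral

/-- `u(s,a,b) = ∫_0^1 x^s (1+x)^a (1-x)^b dx`. -/
noncomputable def uInt (s : ℂ) (a b : ℝ) : ℂ :=
  ∫ x in (0 : ℝ)..1, (x : ℂ) ^ s * (((1 + x) ^ a : ℝ) : ℂ) * (((1 - x) ^ b : ℝ) : ℂ)

open Complex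

lemma uInt_zero_right (s : ℂ) (a : ℝ) :
    uInt s a 0 = ∫ x in (0 : ℝ)..1, (x : ℂ) ^ s * (((1 + x) ^ a : ℝ) : ℂ) := by
  simp [uInt]

lemma continuousOn_one_add_rpow (a : ℝ) :
    ContinuousOn (fun x : ℝ => (1 + x) ^ a) (Set.Ioi (-1)) := fun x hx =>
  (ContinuousAt.rpow_const (f := fun x => 1 + x) (by fun_prop)
    (Or.inl (by simp only [Set.mem_Ioi] at hx; linarith))).continuousWithinAt

lemma intervalIntegrable_cpow_mul_one_add_rpow {s : ℂ} (hs : -1 < s.re) (a : ℝ) :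
    IntervalIntegrable (fun x : ℝ => (x : ℂ) ^ s * (((1 + x) ^ a : ℝ) : ℂ)) volume 0 1 := by
  have hsub : Set.uIcc (0 : ℝ) 1 ⊆ Set.Ioi (-1) := fun x hx => by
    rw [Set.uIcc_of_le zero_le_one] at hx
    exact lt_of_lt_of_le (by norm_num) hx.1
  exact (intervalIntegrable_cpow' hs).mul_continuousOn
    (continuous_ofReal.comp_continuousOn ((continuousOn_one_add_rpow a).mono hsub))

lemma hasDerivAt_cpow_add_one_mul_one_add_rpow_add_one {s : ℂ} (hs : s ≠ -1) (a : ℝ) {x : ℝ}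
    (hx : 0 < x) :
    HasDerivAt (fun y : ℝ => (y : ℂ) ^ (s + 1) * (((1 + y) ^ (a + 1) : ℝ) : ℂ))
      ((s + 1) * ((x : ℂ) ^ s * (((1 + x) ^ (a + 1) : ℝ) : ℂ))
        + (a + 1) * ((x : ℂ) ^ (s + 1) * (((1 + x) ^ a : ℝ) : ℂ))) x := by
  have hcpow : HasDerivAt (fun y : ℝ => (y : ℂ) ^ (s + 1)) ((s + 1) * (x : ℂ) ^ s) x := by
    simpa using hasDerivAt_ofReal_cpow_const hx.ne' (r := s + 1)
      (by rwa [Ne, add_eq_zero_iff_eq_neg])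
  have hrpow : HasDerivAt (fun y : ℝ => (1 + y) ^ (a + 1)) ((a + 1) * (1 + x) ^ a) x := by
    simpa [Function.comp_def] using
      (Real.hasDerivAt_rpow_const (p := a + 1) (Or.inl (by linarith))).comp x
        ((hasDerivAt_id' x).const_add 1)
  refine (hcpow.mul hrpow.ofReal_comp).congr_deriv ?_
  push_cast
  ring

lemma cpow_mul_one_add_rpow_add_one {s : ℂ} (hs : s ≠ -1) (a : ℝ) {x : ℝ} (hx : 0 ≤ x) :
    (x : ℂ) ^ s * (((1 + x) ^ (a + 1) : ℝ) : ℂ) =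
      (x : ℂ) ^ s * (((1 + x) ^ a : ℝ) : ℂ) + (x : ℂ) ^ (s + 1) * (((1 + x) ^ a : ℝ) : ℂ) := by
  have hs1 : s + 1 ≠ 0 := by rwa [Ne, add_eq_zero_iff_eq_neg]
  have hcpow : (x : ℂ) ^ (s + 1) = (x : ℂ) ^ s * x := by
    rcases hx.eq_or_lt with rfl | hx
    · simp [zero_cpow hs1]
    · rw [cpow_add _ _ (ofReal_ne_zero.mpr hx.ne'), cpow_one]
  rw [Real.rpow_add_one (by linarith), hcpow]
  push_cast
  ring

lemma uInt_add_one_exponent {s : ℂ} (hs : -1 < s.re) (a : ℝ) :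
    uInt s (a + 1) 0 = uInt s a 0 + uInt (s + 1) a 0 := by
  have hs1 : -1 < (s + 1).re := by simp only [add_re, one_re]; linarith
  have hs' : s ≠ -1 := fun h => by simp [h] at hs
  simp only [uInt_zero_right]
  rw [← integral_add (intervalIntegrable_cpow_mul_one_add_rpow hs a)
    (intervalIntegrable_cpow_mul_one_add_rpow hs1 a)]
  refine integral_congr fun x hx => ?_
  rw [Set.uIcc_of_le zero_le_one] at hx
  exact cpow_mul_one_add_rpow_add_one hs' a hx.1

lemma add_one_mul_uInt_add_add_one_mul_uInt {s : ℂ} (hs : -1 < s.re) (a : ℝ) :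
    (s + 1) * uInt s (a + 1) 0 + (a + 1) * uInt (s + 1) a 0 = ((2 ^ (a + 1) : ℝ) : ℂ) := by
  have hs1 : -1 < (s + 1).re := by simp only [add_re, one_re]; linarith
  have hs' : s ≠ -1 := fun h => by simp [h] at hs
  have hcont : ContinuousOn (fun y : ℝ => (y : ℂ) ^ (s + 1) * (((1 + y) ^ (a + 1) : ℝ) : ℂ))
      (Set.Icc 0 1) :=
    (continuous_ofReal_cpow_const (by simp only [add_re, one_re]; linarith)).continuousOn.mul
      (continuous_ofReal.comp_continuousOn
        ((continuousOn_one_add_rpow _).mono fun x hx => by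
          simp only [Set.mem_Ioi]; linarith [hx.1]))
  have hJ := (intervalIntegrable_cpow_mul_one_add_rpow hs (a + 1)).const_mul (s + 1)
  have hI := (intervalIntegrable_cpow_mul_one_add_rpow hs1 a).const_mul ((a : ℂ) + 1)
  have hftc := integral_eq_sub_of_hasDeriv_right_of_le zero_le_one hcont
    (fun x hx => (hasDerivAt_cpow_add_one_mul_one_add_rpow_add_one hs' a hx.1).hasDerivWithinAt)
    (hJ.add hI)
  rw [integral_add hJ hI, intervalIntegral.integral_const_mul,
    intervalIntegral.integral_const_mul] at hftc
  rw [uInt_zero_right, uInt_zero_right, hftc]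
  norm_num [zero_cpow (show s + 1 ≠ 0 by rwa [Ne, add_eq_zero_iff_eq_neg])]

theorem stmt12_general (s : ℂ) (a : ℝ) (hs : -1 < s.re) :
    uInt s a 0 = (((2 : ℝ) ^ (a + 1) : ℝ) : ℂ) / (s + 1) -
      (1 + ((a : ℂ) + 1) / (s + 1)) * uInt (s + 1) a 0 := by
  have hs1 : s + 1 ≠ 0 := fun h => by simp [eq_neg_of_add_eq_zero_left h] at hs
  have hboundary := add_one_mul_uInt_add_add_one_mul_uInt hs a
  rw [uInt_add_one_exponent hs] at hboundary
  field_simp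
  linear_combination hboundary

/-- `u(s, a, 0) = 2^{a+1}/(s+1) − (1 + (a+1)/(s+1)) u(s+1, a, 0)`. -/
theorem stmt12 (s : ℂ) (a : ℝ) (hs : -1 < s.re) (ha : -1 < a) :
    uInt s a 0 = (((2 : ℝ) ^ (a + 1) : ℝ) : ℂ) / (s + 1) -
      (1 + ((a : ℂ) + 1) / (s + 1)) * uInt (s + 1) a 0 :=
  stmt12_general s a hs
end

section
/- Let a, b ≥ -1/2 be strict half-integers (i.e., 2a and 2b are odd integers) with a ≠ b, and set m = a + b + 3 (an integer). Then the (m-1)-st derivative of (1+x)^a(1-x)^b at x = 0 is nonzero; equivalently, Res_{s=-m} u(s,a,b) ≠ 0. -/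
open Finset

/-- Falling-factorial-like product `a (a-1) ⋯ (a-k+1)`. -/
noncomputable def pp (a : ℝ) (k : ℕ) : ℝ := ∏ i ∈ Finset.range k, (a - (i : ℝ))

@[simp] lemma pp_zero (a : ℝ) : pp a 0 = 1 := by simp [pp]

lemma pp_succ (a : ℝ) (k : ℕ) : pp a (k + 1) = pp a k * (a - k) := by
  simp [pp, Finset.prod_range_succ]

lemma pp_add (a : ℝ) (s t : ℕ) : pp a (s + t) = pp a s * pp (a - s) t := by
  simp only [pp, Finset.prod_range_add]
  congr 1
  refine Finset.prod_congr rfl fun i _ => ?_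
  push_cast; ring

lemma pp_reflect (c : ℝ) (j : ℕ) : pp ((j : ℝ) - 1 - c) j = (-1 : ℝ) ^ j * pp c j := by
  unfold pp
  have step1 : ∏ i ∈ Finset.range j, ((j : ℝ) - 1 - c - (i : ℝ))
      = ∏ i ∈ Finset.range j, (((j - 1 - i : ℕ) : ℝ) - c) := by
    refine Finset.prod_congr rfl fun i hi => ?_
    rw [Finset.mem_range] at hi
    have h1 : ((j - 1 - i : ℕ) : ℝ) = (j : ℝ) - 1 - i := by
      have h2 : 1 + i ≤ j := by omega
      rw [show j - 1 - i = j - (1 + i) by omega, Nat.cast_sub h2]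
      push_cast; ring
    rw [h1]; ring
  rw [step1, Finset.prod_range_reflect (fun i => ((i : ℝ) - c)) j]
  rw [show ((-1 : ℝ)) ^ j = ∏ _i ∈ Finset.range j, (-1 : ℝ) by simp, ← Finset.prod_mul_distrib]
  refine Finset.prod_congr rfl fun i _ => ?_
  ring

/-- The basic single term in the Leibniz expansion. -/
noncomputable def st (a b x : ℝ) (kj : ℕ × ℕ) : ℝ :=
  (pp a kj.1 * pp b kj.2 * (-1) ^ kj.2) *
    ((1 + x) ^ (a - (kj.1 : ℝ)) * (1 - x) ^ (b - (kj.2 : ℝ)))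

lemma st_hasDerivAt (a b : ℝ) (k j : ℕ) {x : ℝ} (h1 : 0 < 1 + x) (h2 : 0 < 1 - x) :
    HasDerivAt (fun y => st a b y (k, j))
      (st a b x (k + 1, j) + st a b x (k, j + 1)) x := by
  have H1 : HasDerivAt (fun y : ℝ => (1 + y) ^ (a - (k : ℝ)))
      (1 * (a - (k : ℝ)) * (1 + x) ^ (a - (k : ℝ) - 1)) x :=
    (HasDerivAt.const_add 1 (hasDerivAt_id x)).rpow_const (Or.inl h1.ne')
  have H2 : HasDerivAt (fun y : ℝ => (1 - y) ^ (b - (j : ℝ)))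
      (-1 * (b - (j : ℝ)) * (1 - x) ^ (b - (j : ℝ) - 1)) x := by
    have := ((hasDerivAt_id x).const_sub 1).rpow_const (p := b - (j : ℝ)) (Or.inl h2.ne')
    simpa using this
  have H := (H1.mul H2).const_mul (pp a k * pp b j * (-1 : ℝ) ^ j)
  convert (show HasDerivAt (fun y => st a b y (k, j)) _ x from H) using 1
  simp only [st, pp_succ]
  rw [show a - ((k + 1 : ℕ) : ℝ) = a - (k : ℝ) - 1 by push_cast; ring,
      show b - ((j + 1 : ℕ) : ℝ) = b - (j : ℝ) - 1 by push_cast; ring]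
  ring

/-- Leibniz-type formula for the iterated derivatives of `(1+x)^a (1-x)^b` on `(-1,1)`. -/
lemma formula (a b : ℝ) (n : ℕ) :
    ∀ x ∈ Set.Ioo (-1 : ℝ) 1,
      iteratedDeriv n (fun y : ℝ => (1 + y) ^ a * (1 - y) ^ b) x
        = ∑ kj ∈ Finset.HasAntidiagonal.antidiagonal n, (Nat.choose n kj.1 : ℝ) * st a b x kj := by
  induction n with
  | zero =>
    intro x _
    simp [st, Finset.Nat.antidiagonal_zero]
  | succ n IH =>
    intro x hx
    obtain ⟨hx1, hx2⟩ := hx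
    have h1 : 0 < 1 + x := by linarith
    have h2 : 0 < 1 - x := by linarith
    have hev : iteratedDeriv n (fun y : ℝ => (1 + y) ^ a * (1 - y) ^ b)
        =ᶠ[nhds x] fun y => ∑ kj ∈ Finset.HasAntidiagonal.antidiagonal n, (Nat.choose n kj.1 : ℝ) * st a b y kj :=
      Filter.eventuallyEq_of_mem (isOpen_Ioo.mem_nhds ⟨hx1, hx2⟩) (fun y hy => IH y hy)
    have hD : HasDerivAt
        (fun y => ∑ kj ∈ Finset.HasAntidiagonal.antidiagonal n, (Nat.choose n kj.1 : ℝ) * st a b y kj)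
        (∑ kj ∈ Finset.HasAntidiagonal.antidiagonal n,
          (Nat.choose n kj.1 : ℝ) * (st a b x (kj.1 + 1, kj.2) + st a b x (kj.1, kj.2 + 1))) x := by
      refine HasDerivAt.fun_sum fun kj _ => ?_
      exact ((st_hasDerivAt a b kj.1 kj.2 h1 h2).const_mul _)
    rw [iteratedDeriv_succ, hev.deriv_eq, hD.deriv]
    -- now a purely combinatorial rearrangement
    have aux1 : ∑ kj ∈ Finset.HasAntidiagonal.antidiagonal (n + 1), (Nat.choose n kj.1 : ℝ) * st a b x kj
        = (Nat.choose n 0 : ℝ) * st a b x (0, n + 1)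
          + ∑ kj ∈ Finset.HasAntidiagonal.antidiagonal n, (Nat.choose n (kj.1 + 1) : ℝ) * st a b x (kj.1 + 1, kj.2) :=
      Finset.Nat.sum_antidiagonal_succ
        (f := fun kj => (Nat.choose n kj.1 : ℝ) * st a b x kj)
    have aux2 : ∑ kj ∈ Finset.HasAntidiagonal.antidiagonal (n + 1), (Nat.choose n kj.1 : ℝ) * st a b x kj
        = (Nat.choose n (n + 1) : ℝ) * st a b x (n + 1, 0)
          + ∑ kj ∈ Finset.HasAntidiagonal.antidiagonal n, (Nat.choose n kj.1 : ℝ) * st a b x (kj.1, kj.2 + 1) :=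
      Finset.Nat.sum_antidiagonal_succ'
        (f := fun kj => (Nat.choose n kj.1 : ℝ) * st a b x kj)
    have aux3 : ∑ kj ∈ Finset.HasAntidiagonal.antidiagonal (n + 1), (Nat.choose (n + 1) kj.1 : ℝ) * st a b x kj
        = (Nat.choose (n + 1) 0 : ℝ) * st a b x (0, n + 1)
          + ∑ kj ∈ Finset.HasAntidiagonal.antidiagonal n,
              (Nat.choose (n + 1) (kj.1 + 1) : ℝ) * st a b x (kj.1 + 1, kj.2) :=
      Finset.Nat.sum_antidiagonal_succ
        (f := fun kj => (Nat.choose (n + 1) kj.1 : ℝ) * st a b x kj)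
    rw [aux3]
    symm
    have hch : ∀ k : ℕ, (Nat.choose (n + 1) (k + 1) : ℝ)
        = (Nat.choose n k : ℝ) + (Nat.choose n (k + 1) : ℝ) := by
      intro k; rw [Nat.choose_succ_succ]; push_cast; ring
    calc (Nat.choose (n + 1) 0 : ℝ) * st a b x (0, n + 1)
          + ∑ kj ∈ Finset.HasAntidiagonal.antidiagonal n,
              (Nat.choose (n + 1) (kj.1 + 1) : ℝ) * st a b x (kj.1 + 1, kj.2)
        = ((Nat.choose n 0 : ℝ) * st a b x (0, n + 1)
            + ∑ kj ∈ Finset.HasAntidiagonal.antidiagonal n,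
                (Nat.choose n (kj.1 + 1) : ℝ) * st a b x (kj.1 + 1, kj.2))
          + ∑ kj ∈ Finset.HasAntidiagonal.antidiagonal n,
              (Nat.choose n kj.1 : ℝ) * st a b x (kj.1 + 1, kj.2) := by
          simp only [hch, Nat.choose_zero_right, Nat.cast_one, add_mul]
          rw [Finset.sum_add_distrib]; ring
      _ = ((Nat.choose n (n + 1) : ℝ) * st a b x (n + 1, 0)
            + ∑ kj ∈ Finset.HasAntidiagonal.antidiagonal n,
                (Nat.choose n kj.1 : ℝ) * st a b x (kj.1, kj.2 + 1))
          + ∑ kj ∈ Finset.HasAntidiagonal.antidiagonal n,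
              (Nat.choose n kj.1 : ℝ) * st a b x (kj.1 + 1, kj.2) := by rw [← aux1, aux2]
      _ = ∑ kj ∈ Finset.HasAntidiagonal.antidiagonal n,
            (Nat.choose n kj.1 : ℝ) * (st a b x (kj.1 + 1, kj.2) + st a b x (kj.1, kj.2 + 1)) := by
          rw [Nat.choose_succ_self]
          simp only [Nat.cast_zero, zero_mul, zero_add, mul_add]
          rw [Finset.sum_add_distrib]; ring

/-- The key combinatorial evaluation. -/
lemma comb (a b : ℝ) (n : ℕ) (hab : (n : ℝ) + 1 = a + b + 2) :
    ∑ k ∈ Finset.range (n + 2),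
        (Nat.choose (n + 1) k : ℝ) * pp a k * pp b (n + 1 - k) * (-1) ^ (n + 1 - k)
      = (a - b) * 2 ^ n * pp a n := by
  have step : ∀ k ∈ Finset.range (n + 2),
      (Nat.choose (n + 1) k : ℝ) * pp a k * pp b (n + 1 - k) * (-1) ^ (n + 1 - k)
        = (Nat.choose (n + 1) k : ℝ) * ((a + 1 - k) * pp a n) := by
    intro k hk
    rw [Finset.mem_range] at hk
    have hk' : k ≤ n + 1 := by omega
    set t : ℕ := n + 1 - k with ht
    have hkt : k + t = n + 1 := by omega
    have htc : (t : ℝ) = (n : ℝ) + 1 - k := by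
      have : ((n + 1 - k : ℕ) : ℝ) = ((n + 1 : ℕ) : ℝ) - k := by
        rw [Nat.cast_sub hk']
      rw [ht, this]; push_cast; ring
    have hrev : pp b t * (-1 : ℝ) ^ t = pp (a + 1 - k) t := by
      have := pp_reflect b t
      rw [htc] at this
      rw [show (n : ℝ) + 1 - (k : ℝ) - 1 - b = a + 1 - k by linarith] at this
      rw [this]; ring
    have hsplit : pp a k * pp (a + 1 - (k : ℝ)) t = (a + 1 - k) * pp a n := by
      rcases Nat.eq_zero_or_pos t with h0 | hpos
      · -- k = n + 1
        have hk1 : k = n + 1 := by omega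
        subst hk1
        rw [h0]
        simp only [pp_zero, mul_one]
        rw [show (n + 1 : ℕ) = n + 1 from rfl, pp_succ]
        push_cast; ring
      · obtain ⟨s, hs⟩ := Nat.exists_eq_add_of_lt hpos
        have hs' : t = s + 1 := by omega
        have hns : k + s = n := by omega
        rw [hs']
        have e1 : pp (a + 1 - (k : ℝ)) (s + 1) = (a + 1 - k) * pp (a - k) s := by
          unfold pp
          rw [Finset.prod_range_succ']
          have : ∀ i, (a + 1 - (k : ℝ) - ((i + 1 : ℕ) : ℝ)) = (a - k) - i := by
            intro i; push_cast; ring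
          simp only [this, Nat.cast_zero, sub_zero]
          ring
        rw [e1, ← hns, pp_add]
        ring
    calc (Nat.choose (n + 1) k : ℝ) * pp a k * pp b t * (-1) ^ t
        = (Nat.choose (n + 1) k : ℝ) * (pp a k * (pp b t * (-1) ^ t)) := by ring
      _ = (Nat.choose (n + 1) k : ℝ) * (pp a k * pp (a + 1 - (k : ℝ)) t) := by rw [hrev]
      _ = (Nat.choose (n + 1) k : ℝ) * ((a + 1 - k) * pp a n) := by rw [hsplit]
  rw [Finset.sum_congr rfl step]
  have hS : ∑ k ∈ Finset.range (n + 2), (Nat.choose (n + 1) k : ℝ) * (a + 1 - k)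
      = (a - b) * 2 ^ n := by
    have hrefl : ∑ k ∈ Finset.range (n + 2), (Nat.choose (n + 1) k : ℝ) * (a + 1 - k)
        = ∑ k ∈ Finset.range (n + 2), (Nat.choose (n + 1) k : ℝ) * (a - n + k) := by
      rw [← Finset.sum_range_reflect
        (fun k => (Nat.choose (n + 1) k : ℝ) * (a + 1 - k)) (n + 2)]
      refine Finset.sum_congr rfl fun k hk => ?_
      rw [Finset.mem_range] at hk
      have hk' : k ≤ n + 1 := by omega
      have h1 : n + 2 - 1 - k = n + 1 - k := by omega
      rw [h1, Nat.choose_symm hk']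
      have h2 : ((n + 1 - k : ℕ) : ℝ) = (n : ℝ) + 1 - k := by
        rw [Nat.cast_sub hk']; push_cast; ring
      rw [h2]; ring
    have hsum : ∑ k ∈ Finset.range (n + 2), (Nat.choose (n + 1) k : ℝ) = 2 ^ (n + 1) := by
      have := Nat.sum_range_choose (n + 1)
      have h2 : ((∑ m ∈ Finset.range (n + 2), Nat.choose (n + 1) m : ℕ) : ℝ)
          = ((2 ^ (n + 1) : ℕ) : ℝ) := by exact_mod_cast congrArg (Nat.cast (R := ℝ)) this
      push_cast at h2
      exact h2
    have h2S : (∑ k ∈ Finset.range (n + 2), (Nat.choose (n + 1) k : ℝ) * (a + 1 - k))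
        + ∑ k ∈ Finset.range (n + 2), (Nat.choose (n + 1) k : ℝ) * (a + 1 - k)
        = (2 * a + 1 - n) * 2 ^ (n + 1) := by
      nth_rewrite 2 [hrefl]
      rw [← Finset.sum_add_distrib, ← hsum, Finset.mul_sum]
      refine Finset.sum_congr rfl fun k _ => ?_
      ring
    have hab' : 2 * a + 1 - n = a - b := by linarith
    rw [hab'] at h2S
    have : (2:ℝ) ^ (n+1) = 2 * 2 ^ n := by ring
    rw [this] at h2S
    linarith
  calc ∑ k ∈ Finset.range (n + 2), (Nat.choose (n + 1) k : ℝ) * ((a + 1 - k) * pp a n)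
      = (∑ k ∈ Finset.range (n + 2), (Nat.choose (n + 1) k : ℝ) * (a + 1 - k)) * pp a n := by
        rw [Finset.sum_mul]
        refine Finset.sum_congr rfl fun k _ => ?_
        ring
    _ = (a - b) * 2 ^ n * pp a n := by rw [hS]

/-- Let `a, b ≥ -1/2` be strict half-integers with `a ≠ b`, and `m = a + b + 3` (an integer).
Then the `(m-1)`-st derivative of `(1+x)^a (1-x)^b` at `x = 0` is nonzero (equivalently,
`Res_{s=-m} u(s,a,b) ≠ 0`). -/
theorem stmt14 (a b : ℝ) (ka kb : ℤ) (hka : a = (ka : ℝ) + 1 / 2) (hkb : b = (kb : ℝ) + 1 / 2)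
    (ha : -(1 / 2) ≤ a) (hb : -(1 / 2) ≤ b) (hab : a ≠ b)
    (m : ℕ) (hm : (m : ℝ) = a + b + 3) :
    iteratedDeriv (m - 1) (fun x : ℝ => (1 + x) ^ a * (1 - x) ^ b) 0 ≠ 0 := by
  have hm2 : 2 ≤ m := by
    have : (2 : ℝ) ≤ (m : ℝ) := by linarith
    exact_mod_cast this
  set n : ℕ := m - 2 with hn
  have hmn : m - 1 = n + 1 := by omega
  have hncast : (n : ℝ) + 1 = a + b + 2 := by
    have : ((m - 2 : ℕ) : ℝ) = (m : ℝ) - 2 := by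
      rw [Nat.cast_sub hm2]; norm_num
    rw [hn, this]; linarith
  have h0 : (0 : ℝ) ∈ Set.Ioo (-1 : ℝ) 1 := by norm_num
  rw [hmn, formula a b (n + 1) 0 h0,
    Finset.Nat.sum_antidiagonal_eq_sum_range_succ_mk
      (fun kj => (Nat.choose (n + 1) kj.1 : ℝ) * st a b 0 kj) (n + 1)]
  have hsimp : ∀ k ∈ Finset.range (n + 2),
      (Nat.choose (n + 1) k : ℝ) * st a b 0 (k, n + 1 - k)
        = (Nat.choose (n + 1) k : ℝ) * pp a k * pp b (n + 1 - k) * (-1) ^ (n + 1 - k) := by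
    intro k _
    simp only [st]
    rw [add_zero, sub_zero, Real.one_rpow, Real.one_rpow]
    ring
  rw [show Nat.succ (n + 1) = n + 2 from rfl]
  rw [Finset.sum_congr rfl hsimp, comb a b n hncast]
  have hppne : pp a n ≠ 0 := by
    unfold pp
    rw [Finset.prod_ne_zero_iff]
    intro i _
    intro hcon
    have h2 : ((2 * ka - 2 * i : ℤ) : ℝ) = -1 := by
      push_cast
      rw [hka] at hcon
      linarith
    have h3 : (2 * ka - 2 * i : ℤ) = -1 := by exact_mod_cast h2
    omega
  have habne : a - b ≠ 0 := sub_ne_zero.mpr hab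
  positivity
end

section
/- Let a ≥ -1/2 be a strict half-integer with a > b, b ≥ -1/2 a strict half-integer, a - b ∈ ℕ, and m = a + b + 3 ∈ ℤ. Then the sum ∑_{i+2j = m-1, 0 ≤ i ≤ a-b} (-1)^j · C(a-b, i) · C(b, j) is nonzero, where C(x, k) = x(x-1)⋯(x-k+1)/k! is the generalized binomial coefficient; indeed, all nonzero summands have the same sign. -/
open Finset

/-- The generalized binomial coefficient `C(x, k) = x(x-1)⋯(x-k+1)/k!`. -/
noncomputable def genChoose (x : ℝ) (k : ℕ) : ℝ :=
  (∏ i ∈ Finset.range k, (x - (i : ℝ))) / (Nat.factorial k : ℝ)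

lemma sign_prod (c : ℕ) (b : ℝ) (hb : b = (c : ℝ) - 1/2) :
    ∀ j, c ≤ j → 0 < (-1 : ℝ) ^ (j - c) * ∏ i ∈ Finset.range j, (b - (i : ℝ)) := by
  intro j hj
  induction j, hj using Nat.le_induction with
  | base =>
    simp only [Nat.sub_self, pow_zero, one_mul]
    apply Finset.prod_pos
    intro i hi
    have hi' : i < c := Finset.mem_range.mp hi
    have : (i : ℝ) + 1 ≤ (c : ℝ) := by exact_mod_cast hi'
    rw [hb]; linarith
  | succ j hj ih =>
    rw [Finset.prod_range_succ, Nat.succ_sub hj, pow_succ]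
    have hjc : (c : ℝ) ≤ (j : ℝ) := Nat.cast_le.mpr hj
    have hneg : b - (j : ℝ) < 0 := by rw [hb]; linarith
    nlinarith [ih]

lemma genChoose_nat_pos (d i : ℕ) (h : i ≤ d) : 0 < genChoose (d : ℝ) i := by
  unfold genChoose
  apply div_pos
  · apply Finset.prod_pos
    intro k hk
    have hk' : k < i := Finset.mem_range.mp hk
    have : (k : ℝ) + 1 ≤ (d : ℝ) := by exact_mod_cast lt_of_lt_of_le hk' h
    linarith
  · exact_mod_cast Nat.factorial_pos i

/-- For strict half-integers `a > b ≥ -1/2` with `a - b = d ∈ ℕ` and `m = a + b + 3 ∈ ℤ`,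
the sum `∑_{i+2j=m-1, 0≤i≤a-b} (-1)^j C(a-b, i) C(b, j)` is nonzero. -/
theorem stmt15 (a b : ℝ) (ka kb : ℤ) (hka : a = (ka : ℝ) + 1 / 2) (hkb : b = (kb : ℝ) + 1 / 2)
    (hb : -(1 / 2) ≤ b) (hab : b < a)
    (d : ℕ) (hd : (d : ℝ) = a - b)
    (m : ℕ) (hm : (m : ℝ) = a + b + 3) :
    (∑ p ∈ (Finset.range m ×ˢ Finset.range m).filter
        fun p => p.1 + 2 * p.2 + 1 = m ∧ p.1 ≤ d,
      (-1 : ℝ) ^ p.2 * genChoose (d : ℝ) p.1 * genChoose b p.2) ≠ 0 := by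
  have hkbge : (-1 : ℤ) ≤ kb := by
    have : (-1 : ℝ) ≤ (kb : ℝ) := by rw [hkb] at hb; linarith
    exact_mod_cast this
  set c : ℕ := (kb + 1).toNat with hcdef
  have hcR : (c : ℝ) = (kb : ℝ) + 1 := by
    have h1 : ((kb + 1).toNat : ℤ) = kb + 1 := Int.toNat_of_nonneg (by linarith)
    exact_mod_cast h1
  have hbc : b = (c : ℝ) - 1/2 := by rw [hcR, hkb]; ring
  have hd1 : 1 ≤ d := by
    have hka' : (kb : ℝ) < (ka : ℝ) := by rw [hka, hkb] at hab; linarith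
    have hk : kb < ka := by exact_mod_cast hka'
    have hk1 : (kb : ℝ) + 1 ≤ (ka : ℝ) := by exact_mod_cast hk
    have : (1 : ℝ) ≤ (d : ℝ) := by rw [hd, hka, hkb]; linarith
    exact_mod_cast this
  have habge : b + 1 ≤ a := by
    have : (1 : ℝ) ≤ (d : ℝ) := by exact_mod_cast hd1
    linarith [hd ▸ this]
  have hm3 : 3 ≤ m := by
    have : (3 : ℝ) ≤ (m : ℝ) := by rw [hm]; linarith
    exact_mod_cast this
  set S := (Finset.range m ×ˢ Finset.range m).filter
      (fun p => p.1 + 2 * p.2 + 1 = m ∧ p.1 ≤ d) with hS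
  have hterm : ∀ p ∈ S,
      0 < (-1 : ℝ) ^ c * ((-1 : ℝ) ^ p.2 * genChoose (d : ℝ) p.1 * genChoose b p.2) := by
    intro p hp
    rw [hS, Finset.mem_filter] at hp
    obtain ⟨hmem, hsum, hle⟩ := hp
    -- show c ≤ p.2
    have hcast : (p.1 : ℝ) + 2 * (p.2 : ℝ) + 1 = (m : ℝ) := by exact_mod_cast hsum
    have hleR : (p.1 : ℝ) ≤ (d : ℝ) := by exact_mod_cast hle
    have hj2 : (c : ℝ) < (p.2 : ℝ) := by
      rw [hd] at hleR
      rw [hm] at hcast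
      rw [hbc] at hcast hleR
      linarith
    have hcle : c ≤ p.2 := le_of_lt (by exact_mod_cast hj2)
    have hsp := sign_prod c b hbc p.2 hcle
    have hfac : (0 : ℝ) < (Nat.factorial p.2 : ℝ) := by exact_mod_cast Nat.factorial_pos p.2
    have hgb : 0 < (-1 : ℝ) ^ (p.2 - c) * genChoose b p.2 := by
      unfold genChoose
      rw [← mul_div_assoc]
      exact div_pos hsp hfac
    have hpow : (-1 : ℝ) ^ c * (-1 : ℝ) ^ p.2 = (-1 : ℝ) ^ (p.2 - c) := by
      rw [← pow_add]
      have he : c + p.2 = (p.2 - c) + 2 * c := by omega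
      rw [he, pow_add, pow_mul]
      norm_num
    have hgd := genChoose_nat_pos d p.1 hle
    have : 0 < ((-1 : ℝ) ^ c * (-1 : ℝ) ^ p.2 * genChoose b p.2) * genChoose (d : ℝ) p.1 := by
      rw [hpow]
      exact mul_pos hgb hgd
    nlinarith [this]
  have hne : S.Nonempty := by
    refine ⟨((m - 1) % 2, (m - 1) / 2), ?_⟩
    rw [hS, Finset.mem_filter, Finset.mem_product, Finset.mem_range, Finset.mem_range]
    refine ⟨⟨by omega, by omega⟩, by omega, by omega⟩
  have hpos : 0 < ∑ p ∈ S,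
      (-1 : ℝ) ^ c * ((-1 : ℝ) ^ p.2 * genChoose (d : ℝ) p.1 * genChoose b p.2) :=
    Finset.sum_pos hterm hne
  intro h0
  rw [← Finset.mul_sum, h0, mul_zero] at hpos
  exact lt_irrefl 0 hpos
end

section
/- Let E be a k-dimensional subspace of ℝ^n forming principal angles θ_1, ..., θ_N with the coordinate subspace ℝ^p (where N = min(k, n-k, p, n-p)), and let π_E be the orthogonal projection onto E. Let 𝓔 be the ellipsoid {(y,z) ∈ ℝ^p × ℝ^{n-p} : |y|²/a² + |z|²/b² ≤ 1}. Then vol_k(π_E(𝓔)) = ω_k · a^{N_q} · b^{N_p} · ∏_{j=1}^N (a² cos²θ_j + b² sin²θ_j)^{1/2}, where N_q = max(k - (n-p), 0), N_p = max(k - p, 0), and ω_k is the volume of the Euclidean unit ball in ℝ^k. -/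
open Finset MeasureTheory Real


lemma sum_mul_ind {n : ℕ} (f : Fin n → ℝ) (m : ℕ) (hm : m < n) (c : ℝ) :
    ∑ i : Fin n, f i * (if (i : ℕ) = m then c else 0) = f ⟨m, hm⟩ * c := by
  rw [Finset.sum_eq_single (⟨m, hm⟩ : Fin n)]
  · simp
  · intro i _ hne
    have : (i : ℕ) ≠ m := by simpa [Fin.ext_iff] using hne
    simp [this]
  · simp

lemma key_sum (n p k N Nq Np : ℕ) (hpn : p ≤ n) (hkn : k ≤ n)
    (hN : N = min (min k (n - k)) (min p (n - p)))
    (hNq : Nq = k - (n - p)) (hNp : Np = k - p)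
    (hk : k = N + Nq + Np)
    (θ : Fin N → ℝ)
    (B : Fin k → EuclideanSpace ℝ (Fin n))
    (hB : B = fun j : Fin k => (EuclideanSpace.equiv (Fin n) ℝ).symm fun i =>
      if h : (j : ℕ) < N then
        (if (i : ℕ) = (j : ℕ) then Real.cos (θ ⟨(j : ℕ), h⟩) else 0) +
          (if (i : ℕ) = p + (j : ℕ) then Real.sin (θ ⟨(j : ℕ), h⟩) else 0)
      else if (j : ℕ) < N + Nq then (if (i : ℕ) = (j : ℕ) then (1 : ℝ) else 0)
      else (if (i : ℕ) = p + (j : ℕ) - Nq then (1 : ℝ) else 0))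
    (wa wb : ℝ) (j l : Fin k) :
    ∑ i : Fin n, ((if (i : ℕ) < p then wa else wb) * (B j i * B l i)) =
      if j = l then
        (if h : (j : ℕ) < N then
          wa * Real.cos (θ ⟨(j : ℕ), h⟩) ^ 2 + wb * Real.sin (θ ⟨(j : ℕ), h⟩) ^ 2
        else if (j : ℕ) < N + Nq then wa else wb)
      else 0 := by
  have hjk := j.isLt
  have hlk := l.isLt
  have hBapp : ∀ (j : Fin k) (i : Fin n), B j i =
      (if h : (j : ℕ) < N then
        (if (i : ℕ) = (j : ℕ) then Real.cos (θ ⟨(j : ℕ), h⟩) else 0) +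
          (if (i : ℕ) = p + (j : ℕ) then Real.sin (θ ⟨(j : ℕ), h⟩) else 0)
      else if (j : ℕ) < N + Nq then (if (i : ℕ) = (j : ℕ) then (1 : ℝ) else 0)
      else (if (i : ℕ) = p + (j : ℕ) - Nq then (1 : ℝ) else 0)) := by
    intro j i; rw [hB]; rfl
  -- ranges for l
  rcases Nat.lt_or_ge (l : ℕ) N with hl | hl'
  · -- l < N
    have hl0 : (l : ℕ) < n := by omega
    have hl1 : p + (l : ℕ) < n := by omega
    have hsum : ∑ i : Fin n, ((if (i : ℕ) < p then wa else wb) * (B j i * B l i)) =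
        ((if ((l : ℕ)) < p then wa else wb) * B j ⟨(l : ℕ), hl0⟩) * Real.cos (θ ⟨(l : ℕ), hl⟩)
        + ((if (p + (l : ℕ)) < p then wa else wb) * B j ⟨p + (l : ℕ), hl1⟩) * Real.sin (θ ⟨(l : ℕ), hl⟩) := by
      rw [← sum_mul_ind (fun i => (if (i : ℕ) < p then wa else wb) * B j i) ((l : ℕ)) hl0,
        ← sum_mul_ind (fun i => (if (i : ℕ) < p then wa else wb) * B j i) (p + (l : ℕ)) hl1,
        ← Finset.sum_add_distrib]
      refine Finset.sum_congr rfl fun i _ => ?_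
      rw [hBapp l i, dif_pos hl]
      ring
    rw [hsum]
    rcases Nat.lt_or_ge (j : ℕ) N with hj | hj'
    · -- j < N, l < N
      have e1 : B j ⟨(l : ℕ), hl0⟩ = if ((l:ℕ) = (j:ℕ)) then Real.cos (θ ⟨(j : ℕ), hj⟩) else 0 := by
        rw [hBapp, dif_pos hj]
        have : ¬ ((l:ℕ) = p + (j:ℕ)) := by omega
        simp [this]
      have e2 : B j ⟨p + (l : ℕ), hl1⟩ = if ((l:ℕ) = (j:ℕ)) then Real.sin (θ ⟨(j : ℕ), hj⟩) else 0 := by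
        rw [hBapp, dif_pos hj]
        have h1 : ¬ (p + (l:ℕ) = (j:ℕ)) := by omega
        have h2 : (p + (l:ℕ) = p + (j:ℕ)) ↔ ((l:ℕ) = (j:ℕ)) := by omega
        simp [h1, h2]
      rw [e1, e2]
      by_cases hjl : j = l
      · subst hjl
        have hp1 : (j : ℕ) < p := by omega
        have hp2 : ¬ (p + (j : ℕ) < p) := by omega
        rw [if_pos rfl, if_pos rfl, if_pos hp1, if_neg hp2, if_pos rfl, dif_pos hj]
        ring
      · have : ¬ ((l:ℕ) = (j:ℕ)) := fun h => hjl (Fin.ext h.symm)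
        simp [this, hjl]
    · rcases Nat.lt_or_ge (j : ℕ) (N + Nq) with hj | hj
      · -- N ≤ j < N+Nq, l < N
        have e1 : B j ⟨(l : ℕ), hl0⟩ = 0 := by
          rw [hBapp, dif_neg (show ¬ ((j:ℕ) < N) by omega), if_pos hj]
          have : ¬ ((l:ℕ) = (j:ℕ)) := by omega
          simp [this]
        have e2 : B j ⟨p + (l : ℕ), hl1⟩ = 0 := by
          rw [hBapp, dif_neg (show ¬ ((j:ℕ) < N) by omega), if_pos hj]
          have hNNq : N + Nq ≤ p := by omega
          have : ¬ (p + (l:ℕ) = (j:ℕ)) := by omega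
          simp [this]
        have hjl : ¬ (j = l) := by intro h; subst h; omega
        simp [e1, e2, hjl]
      · -- j ≥ N+Nq, l < N
        have e1 : B j ⟨(l : ℕ), hl0⟩ = 0 := by
          rw [hBapp, dif_neg (show ¬ ((j:ℕ) < N) by omega), if_neg (show ¬ ((j:ℕ) < N + Nq) by omega)]
          have : ¬ ((l:ℕ) = p + (j:ℕ) - Nq) := by omega
          simp [this]
        have e2 : B j ⟨p + (l : ℕ), hl1⟩ = 0 := by
          rw [hBapp, dif_neg (show ¬ ((j:ℕ) < N) by omega), if_neg (show ¬ ((j:ℕ) < N + Nq) by omega)]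
          have : ¬ (p + (l:ℕ) = p + (j:ℕ) - Nq) := by omega
          simp [this]
        have hjl : ¬ (j = l) := by intro h; subst h; omega
        simp [e1, e2, hjl]
  · rcases Nat.lt_or_ge (l : ℕ) (N + Nq) with hl | hl
    · -- N ≤ l < N + Nq
      have hl0 : (l : ℕ) < n := by omega
      have hNNq : N + Nq ≤ p := by omega
      have hsum : ∑ i : Fin n, ((if (i : ℕ) < p then wa else wb) * (B j i * B l i)) =
          ((if ((l : ℕ)) < p then wa else wb) * B j ⟨(l : ℕ), hl0⟩) * 1 := by
        rw [← sum_mul_ind (fun i => (if (i : ℕ) < p then wa else wb) * B j i) ((l : ℕ)) hl0]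
        refine Finset.sum_congr rfl fun i _ => ?_
        rw [hBapp l i, dif_neg (show ¬ ((l:ℕ) < N) by omega), if_pos hl]
        ring
      rw [hsum, if_pos (show (l:ℕ) < p by omega), mul_one]
      rcases Nat.lt_or_ge (j : ℕ) N with hj | hj'
      · have e1 : B j ⟨(l : ℕ), hl0⟩ = 0 := by
          rw [hBapp, dif_pos hj]
          have h1 : ¬ ((l:ℕ) = (j:ℕ)) := by omega
          have h2 : ¬ ((l:ℕ) = p + (j:ℕ)) := by omega
          simp [h1, h2]
        have hjl : ¬ (j = l) := by intro h; subst h; omega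
        simp [e1, hjl]
      · rcases Nat.lt_or_ge (j : ℕ) (N + Nq) with hj | hj
        · have e1 : B j ⟨(l : ℕ), hl0⟩ = if ((l:ℕ) = (j:ℕ)) then (1:ℝ) else 0 := by
            rw [hBapp, dif_neg (show ¬ ((j:ℕ) < N) by omega), if_pos hj]
          rw [e1]
          by_cases hjl : j = l
          · subst hjl
            rw [if_pos rfl, if_pos rfl, dif_neg (show ¬ ((j:ℕ) < N) by omega), if_pos hj, mul_one]
          · have : ¬ ((l:ℕ) = (j:ℕ)) := fun h => hjl (Fin.ext h.symm)
            simp [this, hjl]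
        · have e1 : B j ⟨(l : ℕ), hl0⟩ = 0 := by
            rw [hBapp, dif_neg (show ¬ ((j:ℕ) < N) by omega), if_neg (show ¬ ((j:ℕ) < N + Nq) by omega)]
            have : ¬ ((l:ℕ) = p + (j:ℕ) - Nq) := by omega
            simp [this]
          have hjl : ¬ (j = l) := by intro h; subst h; omega
          simp [e1, hjl]
    · -- l ≥ N + Nq
      have hl0 : p + (l : ℕ) - Nq < n := by omega
      have hsum : ∑ i : Fin n, ((if (i : ℕ) < p then wa else wb) * (B j i * B l i)) =
          ((if (p + (l : ℕ) - Nq) < p then wa else wb) * B j ⟨p + (l : ℕ) - Nq, hl0⟩) * 1 := by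
        rw [← sum_mul_ind (fun i => (if (i : ℕ) < p then wa else wb) * B j i) (p + (l : ℕ) - Nq) hl0]
        refine Finset.sum_congr rfl fun i _ => ?_
        rw [hBapp l i, dif_neg (show ¬ ((l:ℕ) < N) by omega), if_neg (show ¬ ((l:ℕ) < N + Nq) by omega)]
        ring
      rw [hsum, if_neg (show ¬ (p + (l:ℕ) - Nq < p) by omega), mul_one]
      rcases Nat.lt_or_ge (j : ℕ) N with hj | hj'
      · have e1 : B j ⟨p + (l : ℕ) - Nq, hl0⟩ = 0 := by
          rw [hBapp, dif_pos hj]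
          have h1 : ¬ (p + (l:ℕ) - Nq = (j:ℕ)) := by omega
          have h2 : ¬ (p + (l:ℕ) - Nq = p + (j:ℕ)) := by omega
          simp [h1, h2]
        have hjl : ¬ (j = l) := by intro h; subst h; omega
        simp [e1, hjl]
      · rcases Nat.lt_or_ge (j : ℕ) (N + Nq) with hj | hj
        · have hNNq : N + Nq ≤ p := by omega
          have e1 : B j ⟨p + (l : ℕ) - Nq, hl0⟩ = 0 := by
            rw [hBapp, dif_neg (show ¬ ((j:ℕ) < N) by omega), if_pos hj]
            have : ¬ (p + (l:ℕ) - Nq = (j:ℕ)) := by omega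
            simp [this]
          have hjl : ¬ (j = l) := by intro h; subst h; omega
          simp [e1, hjl]
        · have e1 : B j ⟨p + (l : ℕ) - Nq, hl0⟩ =
              if ((l:ℕ) = (j:ℕ)) then (1:ℝ) else 0 := by
            rw [hBapp, dif_neg (show ¬ ((j:ℕ) < N) by omega), if_neg (show ¬ ((j:ℕ) < N + Nq) by omega)]
            have h2 : (p + (l:ℕ) - Nq = p + (j:ℕ) - Nq) ↔ ((l:ℕ) = (j:ℕ)) := by omega
            simp [h2]
          rw [e1]
          by_cases hjl : j = l
          · subst hjl
            rw [if_pos rfl, if_pos rfl, dif_neg (show ¬ ((j:ℕ) < N) by omega), if_neg (show ¬ ((j:ℕ) < N + Nq) by omega), mul_one]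
          · have : ¬ ((l:ℕ) = (j:ℕ)) := fun h => hjl (Fin.ext h.symm)
            simp [this, hjl]


set_option maxHeartbeats 1000000 in
/-- Projection of the `O(p) × O(q)`-invariant ellipsoid
`𝓔 = {|y|²/a² + |z|²/b² ≤ 1} ⊂ ℝ^p × ℝ^{n-p}` onto a `k`-dimensional subspace `E` forming
principal angles `θ_1, ..., θ_N` with `ℝ^p` (where `N = min(k, n-k, p, n-p)`,
`N_q = max(k-(n-p), 0)`, `N_p = max(k-p, 0)`):
`vol_k(π_E(𝓔)) = ω_k a^{N_q} b^{N_p} ∏_j (a² cos²θ_j + b² sin²θ_j)^{1/2}`.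
Here (by orthogonal invariance) `E` is spanned by the orthonormal basis `B` consisting of
`cos θ_j e_j + sin θ_j f_j` for `j < N`, the `N_q` vectors `e_j` (`N ≤ j < N + N_q`), and
the `N_p` vectors `f_t` (`N ≤ t < N + N_p`); `π_E x = ∑_j ⟨x, B j⟩ B j` is the orthogonal
projection onto `E`, and the `k`-volume of `π_E(𝓔) ⊆ E` is computed as the Lebesgue volume
of its preimage under the linear isometry `c ↦ ∑ c_j B j` from `ℝ^k` onto `E`. -/
theorem stmt17 (n p k : ℕ) (hpn : p ≤ n) (hkn : k ≤ n)
    (a b : ℝ) (ha : 0 < a) (hb : 0 < b)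
    (N Nq Np : ℕ)
    (hN : N = min (min k (n - k)) (min p (n - p)))
    (hNq : Nq = k - (n - p)) (hNp : Np = k - p)
    (hk : k = N + Nq + Np)
    (θ : Fin N → ℝ)
    (B : Fin k → EuclideanSpace ℝ (Fin n))
    (hB : B = fun j : Fin k => (EuclideanSpace.equiv (Fin n) ℝ).symm fun i =>
      if h : (j : ℕ) < N then
        (if (i : ℕ) = (j : ℕ) then Real.cos (θ ⟨(j : ℕ), h⟩) else 0) +
          (if (i : ℕ) = p + (j : ℕ) then Real.sin (θ ⟨(j : ℕ), h⟩) else 0)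
      else if (j : ℕ) < N + Nq then (if (i : ℕ) = (j : ℕ) then (1 : ℝ) else 0)
      else (if (i : ℕ) = p + (j : ℕ) - Nq then (1 : ℝ) else 0)) :
    volume ((fun c : EuclideanSpace ℝ (Fin k) => ∑ j : Fin k, c j • B j) ⁻¹'
        ((fun x : EuclideanSpace ℝ (Fin n) => ∑ j : Fin k, (inner ℝ x (B j) : ℝ) • B j) ''
          {x : EuclideanSpace ℝ (Fin n) |
            (∑ i ∈ Finset.univ.filter fun i : Fin n => (i : ℕ) < p, x i ^ 2) / a ^ 2 +
              (∑ i ∈ Finset.univ.filter fun i : Fin n => ¬(i : ℕ) < p, x i ^ 2) / b ^ 2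
              ≤ 1})) =
      volume (Metric.ball (0 : EuclideanSpace ℝ (Fin k)) 1) *
        ENNReal.ofReal (a ^ Nq * b ^ Np *
          ∏ j : Fin N,
            Real.sqrt (a ^ 2 * Real.cos (θ j) ^ 2 + b ^ 2 * Real.sin (θ j) ^ 2)) := by
  classical
  have hinner : ∀ (m : ℕ) (x y : EuclideanSpace ℝ (Fin m)), (inner ℝ x y : ℝ) = ∑ i, x i * y i := by
    intro m x y
    simp [PiLp.inner_apply, RCLike.inner_apply, conj_trivial]
    exact Finset.sum_congr rfl fun i _ => mul_comm _ _
  have hnormsq : ∀ (m : ℕ) (y : EuclideanSpace ℝ (Fin m)), ∑ i, y i ^ 2 = ‖y‖ ^ 2 := by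
    intro m y
    rw [EuclideanSpace.norm_eq, Real.sq_sqrt (by positivity)]
    simp [sq_abs]
  have hwne : ∀ i : Fin n, (if (i : ℕ) < p then a else b) ≠ 0 := by
    intro i; split_ifs; exacts [ha.ne', hb.ne']
  -- the diagonal entries
  set D : ℕ → ℝ := fun m =>
    if h : m < N then Real.sqrt (a ^ 2 * Real.cos (θ ⟨m, h⟩) ^ 2 + b ^ 2 * Real.sin (θ ⟨m, h⟩) ^ 2)
    else if m < N + Nq then a else b with hD
  have hDlt : ∀ (m) (h : m < N), D m =
      Real.sqrt (a ^ 2 * Real.cos (θ ⟨m, h⟩) ^ 2 + b ^ 2 * Real.sin (θ ⟨m, h⟩) ^ 2) := by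
    intro m h; simp only [hD]; rw [dif_pos h]
  have hDmid : ∀ m, ¬ m < N → m < N + Nq → D m = a := by
    intro m h1 h2; simp only [hD]; rw [dif_neg h1, if_pos h2]
  have hDhi : ∀ m, ¬ m < N → ¬ m < N + Nq → D m = b := by
    intro m h1 h2; simp only [hD]; rw [dif_neg h1, if_neg h2]
  have hD_pos : ∀ m, 0 < D m := by
    intro m
    by_cases h : m < N
    · rw [hDlt m h]
      apply Real.sqrt_pos.mpr
      have hcs := Real.sin_sq_add_cos_sq (θ ⟨m, h⟩)
      rcases le_total a b with hab | hab
      · have hba : a ^ 2 ≤ b ^ 2 := by nlinarith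
        have hkey : a ^ 2 * Real.cos (θ ⟨m, h⟩) ^ 2 + b ^ 2 * Real.sin (θ ⟨m, h⟩) ^ 2 ≥
            a ^ 2 * (Real.sin (θ ⟨m, h⟩) ^ 2 + Real.cos (θ ⟨m, h⟩) ^ 2) := by
          nlinarith [mul_le_mul_of_nonneg_right hba (sq_nonneg (Real.sin (θ ⟨m, h⟩)))]
        rw [hcs, mul_one] at hkey
        nlinarith
      · have hba : b ^ 2 ≤ a ^ 2 := by nlinarith
        have hkey : a ^ 2 * Real.cos (θ ⟨m, h⟩) ^ 2 + b ^ 2 * Real.sin (θ ⟨m, h⟩) ^ 2 ≥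
            b ^ 2 * (Real.sin (θ ⟨m, h⟩) ^ 2 + Real.cos (θ ⟨m, h⟩) ^ 2) := by
          nlinarith [mul_le_mul_of_nonneg_right hba (sq_nonneg (Real.cos (θ ⟨m, h⟩)))]
        rw [hcs, mul_one] at hkey
        nlinarith
    · by_cases h2 : m < N + Nq
      · rw [hDmid m h h2]; exact ha
      · rw [hDhi m h h2]; exact hb
  -- the weighted vectors
  set V : Fin k → EuclideanSpace ℝ (Fin n) := fun j =>
    (EuclideanSpace.equiv (Fin n) ℝ).symm fun i => (if (i : ℕ) < p then a else b) * B j i with hV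
  have hVapp : ∀ j i, V j i = (if (i : ℕ) < p then a else b) * B j i := fun j i => rfl
  -- orthonormality of B
  have hBB : ∀ j l : Fin k, (inner ℝ (B j) (B l) : ℝ) = if j = l then 1 else 0 := by
    intro j l
    have h1 : (inner ℝ (B j) (B l) : ℝ) =
        ∑ i : Fin n, ((if (i : ℕ) < p then (1 : ℝ) else 1) * (B j i * B l i)) := by
      rw [hinner n]
      exact Finset.sum_congr rfl fun i _ => by rw [ite_self, one_mul]
    rw [h1, key_sum n p k N Nq Np hpn hkn hN hNq hNp hk θ B hB 1 1 j l]
    by_cases hjl : j = l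
    · simp only [if_pos hjl]
      by_cases hj : (j : ℕ) < N
      · rw [dif_pos hj, one_mul, one_mul, ← Real.sin_sq_add_cos_sq (θ ⟨(j : ℕ), hj⟩)]
        ring
      · rw [dif_neg hj, ite_self]
    · simp only [if_neg hjl]
  -- inner products of the weighted vectors
  have hVV : ∀ j l : Fin k, (inner ℝ (V j) (V l) : ℝ) = if j = l then (D (j : ℕ)) ^ 2 else 0 := by
    intro j l
    have h1 : (inner ℝ (V j) (V l) : ℝ) =
        ∑ i : Fin n, ((if (i : ℕ) < p then a ^ 2 else b ^ 2) * (B j i * B l i)) := by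
      rw [hinner n]
      refine Finset.sum_congr rfl fun i _ => ?_
      rw [hVapp, hVapp]
      by_cases hip : (i : ℕ) < p
      · simp only [if_pos hip]; ring
      · simp only [if_neg hip]; ring
    rw [h1, key_sum n p k N Nq Np hpn hkn hN hNq hNp hk θ B hB (a ^ 2) (b ^ 2) j l]
    by_cases hjl : j = l
    · simp only [if_pos hjl]
      by_cases hj : (j : ℕ) < N
      · rw [dif_pos hj, hDlt _ hj, Real.sq_sqrt (by positivity)]
      · by_cases hj2 : (j : ℕ) < N + Nq
        · rw [dif_neg hj, if_pos hj2, hDmid _ hj hj2]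
        · rw [dif_neg hj, if_neg hj2, hDhi _ hj hj2]
    · simp only [if_neg hjl]
  -- the orthonormal family e
  set e : Fin k → EuclideanSpace ℝ (Fin n) := fun j => (D (j : ℕ))⁻¹ • V j with he_def
  have hej : ∀ j, e j = (D (j : ℕ))⁻¹ • V j := fun j => rfl
  have hee : ∀ j l : Fin k, (inner ℝ (e j) (e l) : ℝ) = if j = l then 1 else 0 := by
    intro j l
    rw [hej j, hej l, real_inner_smul_left, real_inner_smul_right, hVV]
    by_cases hjl : j = l
    · simp only [if_pos hjl, hjl, ↓reduceIte]
      field_simp [(hD_pos (l : ℕ)).ne']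
    · simp only [if_neg hjl]; ring
  have he : Orthonormal ℝ e := orthonormal_iff_ite.mpr hee
  -- inner products against linear combinations of B
  have hLinner : ∀ (u : Fin k → ℝ) (l : Fin k),
      (inner ℝ (∑ j : Fin k, u j • B j) (B l) : ℝ) = u l := by
    intro u l
    rw [sum_inner]
    simp only [real_inner_smul_left, hBB, mul_ite, mul_one, mul_zero]
    simp [Finset.sum_ite_eq']
  have hPL : ∀ (x : EuclideanSpace ℝ (Fin n)) (c : EuclideanSpace ℝ (Fin k)),
      (∑ j : Fin k, (inner ℝ x (B j) : ℝ) • B j) = ∑ j : Fin k, c j • B j ↔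
        ∀ j, (inner ℝ x (B j) : ℝ) = c j := by
    intro x c
    constructor
    · intro h j
      have h1 := congrArg (fun z => (inner ℝ z (B j) : ℝ)) h
      simpa only [hLinner] using h1
    · intro h
      exact Finset.sum_congr rfl fun j _ => by rw [h j]
  -- ellipsoid quadratic form vs. norm
  have hQ : ∀ x y : EuclideanSpace ℝ (Fin n), (∀ i, x i = (if (i : ℕ) < p then a else b) * y i) →
      ((∑ i ∈ Finset.univ.filter fun i : Fin n => (i : ℕ) < p, x i ^ 2) / a ^ 2 +
        (∑ i ∈ Finset.univ.filter fun i : Fin n => ¬(i : ℕ) < p, x i ^ 2) / b ^ 2) = ‖y‖ ^ 2 := by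
    intro x y hxy
    rw [← hnormsq n y,
      ← Finset.sum_filter_add_sum_filter_not Finset.univ (fun i : Fin n => (i : ℕ) < p)
        (fun i => y i ^ 2)]
    congr 1
    · have h2 : ∑ i ∈ Finset.univ.filter fun i : Fin n => (i : ℕ) < p, x i ^ 2 =
          a ^ 2 * ∑ i ∈ Finset.univ.filter fun i : Fin n => (i : ℕ) < p, y i ^ 2 := by
        rw [Finset.mul_sum]
        refine Finset.sum_congr rfl fun i hi => ?_
        have hip : (i : ℕ) < p := (Finset.mem_filter.mp hi).2
        rw [hxy i, if_pos hip]; ring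
      rw [h2, mul_div_cancel_left₀ _ (pow_ne_zero 2 ha.ne')]
    · have h2 : ∑ i ∈ Finset.univ.filter fun i : Fin n => ¬(i : ℕ) < p, x i ^ 2 =
          b ^ 2 * ∑ i ∈ Finset.univ.filter fun i : Fin n => ¬(i : ℕ) < p, y i ^ 2 := by
        rw [Finset.mul_sum]
        refine Finset.sum_congr rfl fun i hi => ?_
        have hip : ¬ (i : ℕ) < p := (Finset.mem_filter.mp hi).2
        rw [hxy i, if_neg hip]; ring
      rw [h2, mul_div_cancel_left₀ _ (pow_ne_zero 2 hb.ne')]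
  -- inner against B vs inner against V
  have hxB : ∀ x y : EuclideanSpace ℝ (Fin n), (∀ i, x i = (if (i : ℕ) < p then a else b) * y i) →
      ∀ j : Fin k, (inner ℝ x (B j) : ℝ) = (inner ℝ y (V j) : ℝ) := by
    intro x y hxy j
    rw [hinner n, hinner n]
    refine Finset.sum_congr rfl fun i _ => ?_
    rw [hxy i, hVapp]
    ring
  -- the main set identity
  have hset : ((fun c : EuclideanSpace ℝ (Fin k) => ∑ j : Fin k, c j • B j) ⁻¹'
        ((fun x : EuclideanSpace ℝ (Fin n) => ∑ j : Fin k, (inner ℝ x (B j) : ℝ) • B j) ''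
          {x : EuclideanSpace ℝ (Fin n) |
            (∑ i ∈ Finset.univ.filter fun i : Fin n => (i : ℕ) < p, x i ^ 2) / a ^ 2 +
              (∑ i ∈ Finset.univ.filter fun i : Fin n => ¬(i : ℕ) < p, x i ^ 2) / b ^ 2
              ≤ 1})) =
      (fun u : EuclideanSpace ℝ (Fin k) =>
        (EuclideanSpace.equiv (Fin k) ℝ).symm fun j => D (j : ℕ) * u j) ''
        Metric.closedBall 0 1 := by
    ext c
    simp only [Set.mem_preimage, Set.mem_image, Set.mem_setOf_eq, Metric.mem_closedBall,
      dist_zero_right]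
    constructor
    · rintro ⟨x, hx, hPx⟩
      have hcx : ∀ j, (inner ℝ x (B j) : ℝ) = c j := (hPL x c).mp hPx
      set y : EuclideanSpace ℝ (Fin n) :=
        (EuclideanSpace.equiv (Fin n) ℝ).symm fun i => (if (i : ℕ) < p then a else b)⁻¹ * x i
        with hy
      have hxy : ∀ i, x i = (if (i : ℕ) < p then a else b) * y i := by
        intro i
        show x i = (if (i : ℕ) < p then a else b) * ((if (i : ℕ) < p then a else b)⁻¹ * x i)
        rw [← mul_assoc, mul_inv_cancel₀ (hwne i), one_mul]
      have hyn : ‖y‖ ≤ 1 := by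
        have h2 : ‖y‖ ^ 2 ≤ 1 := by rw [← hQ x y hxy]; exact hx
        nlinarith [norm_nonneg y]
      set u : EuclideanSpace ℝ (Fin k) :=
        (EuclideanSpace.equiv (Fin k) ℝ).symm fun j => (inner ℝ y (e j) : ℝ) with hu
      have huapp : ∀ j, u j = (inner ℝ y (e j) : ℝ) := fun j => rfl
      refine ⟨u, ?_, ?_⟩
      · have hbessel : ∑ j : Fin k, ‖(inner ℝ (e j) y : ℝ)‖ ^ 2 ≤ ‖y‖ ^ 2 :=
          he.sum_inner_products_le y
        have h2 : ‖u‖ ^ 2 ≤ 1 := by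
          rw [← hnormsq k u]
          have h3 : ∑ j : Fin k, u j ^ 2 = ∑ j : Fin k, ‖(inner ℝ (e j) y : ℝ)‖ ^ 2 := by
            refine Finset.sum_congr rfl fun j _ => ?_
            rw [huapp j, real_inner_comm, Real.norm_eq_abs, sq_abs]
          have h4 : ‖y‖ ^ 2 ≤ 1 := by nlinarith [norm_nonneg y]
          rw [h3]; linarith
        nlinarith [norm_nonneg u]
      · refine PiLp.ext fun j => ?_
        show D (j : ℕ) * u j = c j
        rw [huapp j, hej j, real_inner_smul_right, ← mul_assoc,
          mul_inv_cancel₀ (hD_pos (j : ℕ)).ne', one_mul, ← hxB x y hxy j, hcx j]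
    · rintro ⟨u, hun, huc⟩
      set y : EuclideanSpace ℝ (Fin n) := ∑ j : Fin k, u j • e j with hy
      have hyn2 : ‖y‖ ^ 2 = ∑ j : Fin k, u j ^ 2 := by
        rw [← real_inner_self_eq_norm_sq, hy, he.inner_sum]
        simp [sq]
      set x : EuclideanSpace ℝ (Fin n) :=
        (EuclideanSpace.equiv (Fin n) ℝ).symm fun i => (if (i : ℕ) < p then a else b) * y i
        with hx
      have hxy : ∀ i, x i = (if (i : ℕ) < p then a else b) * y i := fun i => rfl
      refine ⟨x, ?_, ?_⟩
      · rw [hQ x y hxy, hyn2, hnormsq k u]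
        nlinarith [norm_nonneg u]
      · rw [hPL]
        intro j
        rw [hxB x y hxy j]
        have h2 : (inner ℝ y (V j) : ℝ) = D (j : ℕ) * u j := by
          rw [hy, sum_inner, Finset.sum_eq_single j]
          · rw [real_inner_smul_left, hej j, real_inner_smul_left, hVV, if_pos rfl]
            field_simp [(hD_pos (j : ℕ)).ne']
          · intro l _ hlj
            rw [real_inner_smul_left, hej l, real_inner_smul_left, hVV, if_neg hlj]
            ring
          · intro h; exact absurd (Finset.mem_univ j) h
        rw [h2]
        exact congrArg (fun v => v j) huc
  rw [hset]
  -- the diagonal linear map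
  set T : EuclideanSpace ℝ (Fin k) →ₗ[ℝ] EuclideanSpace ℝ (Fin k) :=
    (WithLp.linearEquiv 2 ℝ (Fin k → ℝ)).symm.toLinearMap ∘ₗ
      (Matrix.toLin' (Matrix.diagonal fun j : Fin k => D (j : ℕ))) ∘ₗ
      (WithLp.linearEquiv 2 ℝ (Fin k → ℝ)).toLinearMap with hT
  have hTapp : (fun u : EuclideanSpace ℝ (Fin k) =>
      (EuclideanSpace.equiv (Fin k) ℝ).symm fun j => D (j : ℕ) * u j) = ⇑T := by
    funext u
    refine PiLp.ext fun j => ?_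
    show D (j : ℕ) * u j = Matrix.toLin' (Matrix.diagonal fun j : Fin k => D (j : ℕ)) u j
    simp [Matrix.mulVec_diagonal]
  have hdet : LinearMap.det T = ∏ j : Fin k, D (j : ℕ) := by
    rw [hT]
    have h := LinearMap.det_conj (Matrix.toLin' (Matrix.diagonal fun j : Fin k => D (j : ℕ)))
      (WithLp.linearEquiv 2 ℝ (Fin k → ℝ)).symm
    rw [LinearEquiv.symm_symm] at h
    rw [h, LinearMap.det_toLin', Matrix.det_diagonal]
  have hprodD : ∏ j : Fin k, D (j : ℕ) =
      a ^ Nq * b ^ Np *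
        ∏ j : Fin N, Real.sqrt (a ^ 2 * Real.cos (θ j) ^ 2 + b ^ 2 * Real.sin (θ j) ^ 2) := by
    rw [Fin.prod_univ_eq_prod_range D k]
    conv_lhs => rw [hk]
    rw [Finset.prod_range_add, Finset.prod_range_add]
    have h1 : ∏ i ∈ Finset.range N, D i =
        ∏ j : Fin N, Real.sqrt (a ^ 2 * Real.cos (θ j) ^ 2 + b ^ 2 * Real.sin (θ j) ^ 2) := by
      rw [← Fin.prod_univ_eq_prod_range (fun m => D m) N]
      refine Finset.prod_congr rfl fun j _ => ?_
      rw [hDlt (j : ℕ) j.isLt]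
    have h2 : ∏ i ∈ Finset.range Nq, D (N + i) = a ^ Nq := by
      have hc : ∀ i ∈ Finset.range Nq, D (N + i) = a := by
        intro i hi
        have := Finset.mem_range.mp hi
        exact hDmid _ (by omega) (by omega)
      rw [Finset.prod_congr rfl hc, Finset.prod_const, Finset.card_range]
    have h3 : ∏ i ∈ Finset.range Np, D (N + Nq + i) = b ^ Np := by
      have hc : ∀ i ∈ Finset.range Np, D (N + Nq + i) = b := by
        intro i hi
        exact hDhi _ (by omega) (by omega)
      rw [Finset.prod_congr rfl hc, Finset.prod_const, Finset.card_range]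
    rw [h1, h2, h3]
    ring
  rw [hTapp, Measure.addHaar_image_linearMap, hdet,
    abs_of_pos (Finset.prod_pos fun j _ => hD_pos _), hprodD,
    Measure.addHaar_closedBall volume 0 zero_le_one, one_pow, ENNReal.ofReal_one, one_mul,
    mul_comm]
end
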